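/- arXiv:1704.04089 — 10 statements merged into one kernel-verified Lean document; each statement's English description precedes it below -/
import Mathlib

section
/- Let C be a nonempty finite set and Γ a subgroup of the symmetric group S(C). Then Γ is finitely cancelling if and only if for all finite sets A, B, every parallel bijection f : A × C → B × C has a Γ-equivariant quotient. -/
/-- The transformed bijection `f_{α,β,γ}(a,c) = (β × γ)(f(α⁻¹ a, γ⁻¹ c))`. -/
def transform {A B C : Type} (f : A × C ≃ B × C)
    (α : Equiv.Perm A) (β : Equiv.Perm B) (γ : Equiv.Perm C) : A × C ≃ B × C :=
  ((Equiv.prodCongr α γ).symm.trans f).trans (Equiv.prodCongr β γ)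

/-- The transformed quotient `h_{α,β}(a) = β(h(α⁻¹ a))`. -/
def transformQ {A B : Type} (h : A ≃ B) (α : Equiv.Perm A) (β : Equiv.Perm B) : A ≃ B :=
  (α.symm.trans h).trans β

/-- `h : A ≃ B` is a `Γ`-equivariant quotient of `f : A × C ≃ B × C`. -/
def IsEquivQuotient {C : Type} (Γ : Subgroup (Equiv.Perm C)) {A B : Type}
    (f : A × C ≃ B × C) (h : A ≃ B) : Prop :=
  ∀ (α : Equiv.Perm A) (β : Equiv.Perm B) (γ : Equiv.Perm C), γ ∈ Γ →
    transform f α β γ = f → transformQ h α β = h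

/-- `Γ` is fully cancelling: every bijection `f : A × C ≃ B × C` has a
`Γ`-equivariant quotient. -/
def FullyCancelling (C : Type) (Γ : Subgroup (Equiv.Perm C)) : Prop :=
  ∀ (A B : Type) (f : A × C ≃ B × C), ∃ h : A ≃ B, IsEquivQuotient Γ f h

/-- `Γ` is finitely cancelling: every bijection `f : A × C ≃ B × C` with `A`, `B`
finite has a `Γ`-equivariant quotient. -/
def FinitelyCancelling (C : Type) (Γ : Subgroup (Equiv.Perm C)) : Prop :=
  ∀ (A B : Type), Finite A → Finite B →
    ∀ (f : A × C ≃ B × C), ∃ h : A ≃ B, IsEquivQuotient Γ f h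

set_option linter.unusedSectionVars false

section Marks

variable {G X Y C : Type} [Group G] [Finite G] [Finite X] [Finite Y]

def stabP (φ : G →* Equiv.Perm X) (x : X) : Subgroup G where
  carrier := {g | φ g x = x}
  one_mem' := by simp
  mul_mem' := by
    intro a b ha hb
    simp only [Set.mem_setOf_eq, map_mul, Equiv.Perm.mul_apply] at *
    rw [hb, ha]
  inv_mem' := by
    intro a ha
    simp only [Set.mem_setOf_eq, map_inv] at *
    conv_lhs => rw [← ha]
    exact Equiv.Perm.inv_eq_iff_eq.mpr rfl

lemma stabP_mem {φ : G →* Equiv.Perm X} {x : X} {g : G} : g ∈ stabP φ x ↔ φ g x = x :=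
  Iff.rfl

lemma conj_mem_stabP {φ : G →* Equiv.Perm X} {x : X} (g h : G) :
    g⁻¹ * h * g ∈ stabP φ x ↔ φ h (φ g x) = φ g x := by
  rw [stabP_mem, map_mul, map_mul, map_inv, Equiv.Perm.mul_apply, Equiv.Perm.mul_apply]
  constructor
  · intro hh
    conv_rhs => rw [← hh]
    simp
  · intro hh
    rw [hh]
    simp

lemma stabP_eq_of_le_of_card {H K : Subgroup G} (hle : H ≤ K)
    (hcard : Nat.card K ≤ Nat.card H) : H = K := by
  have hinj : Function.Injective (Subgroup.inclusion hle) := Subgroup.inclusion_injective hle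
  have hbij : Function.Bijective (Subgroup.inclusion hle) := by
    rw [Nat.bijective_iff_injective_and_card]
    exact ⟨hinj, le_antisymm (Nat.card_le_card_of_injective _ hinj) hcard⟩
  ext g
  constructor
  · exact fun h => hle h
  · intro h
    obtain ⟨⟨g', hg'⟩, he⟩ := hbij.2 ⟨g, h⟩
    have : g' = g := congrArg Subtype.val he
    rwa [← this]

lemma rel_marks_aux (φ : G →* Equiv.Perm X) (ψ : G →* Equiv.Perm Y) (χ : G →* Equiv.Perm C)
    (p : X → C) (q : Y → C)
    (hp : ∀ g x, p (φ g x) = χ g (p x)) (hq : ∀ g y, q (ψ g y) = χ g (q y)) :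
    ∀ (n : ℕ) (s : Set X) (t : Set Y)
      (hs : ∀ (g : G) (x : X), x ∈ s → φ g x ∈ s)
      (_ht : ∀ (g : G) (y : Y), y ∈ t → ψ g y ∈ t),
      (∀ (H : Subgroup G) (c : C), (∀ g ∈ H, χ g c = c) →
        {x | x ∈ s ∧ p x = c ∧ ∀ g ∈ H, φ g x = x}.ncard
          = {y | y ∈ t ∧ q y = c ∧ ∀ g ∈ H, ψ g y = y}.ncard) →
      s.ncard = n →
      ∃ F : s → Y, Function.Injective F ∧ Set.range F = t ∧
        (∀ (g : G) (x : X) (hx : x ∈ s), F ⟨φ g x, hs g x hx⟩ = ψ g (F ⟨x, hx⟩)) ∧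
        (∀ (x : X) (hx : x ∈ s), q (F ⟨x, hx⟩) = p x) := by
  intro n
  induction n using Nat.strong_induction_on with
  | _ n IH =>
  intro s t hs ht hm hcard
  classical
  rcases s.eq_empty_or_nonempty with hse | hsne
  · -- empty case
    subst hse
    have htE : t = ∅ := by
      by_contra htne
      obtain ⟨y, hy⟩ := Set.nonempty_iff_ne_empty.mpr htne
      have := hm ⊥ (q y) (by intro g hg; rw [Subgroup.mem_bot] at hg; simp [hg])
      have h0 : {x | x ∈ (∅ : Set X) ∧ p x = q y ∧ ∀ g ∈ (⊥ : Subgroup G), φ g x = x}.ncard = 0 := by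
        simp
      rw [h0] at this
      have : ({y' | y' ∈ t ∧ q y' = q y ∧ ∀ g ∈ (⊥ : Subgroup G), ψ g y' = y'} : Set Y).Nonempty := by
        exact ⟨y, hy, rfl, by intro g hg; rw [Subgroup.mem_bot] at hg; simp [hg]⟩
      rw [← Set.ncard_pos (Set.toFinite _)] at this
      omega
    have hE : IsEmpty (↥(∅ : Set X)) := Set.isEmpty_coe_sort.mpr rfl
    refine ⟨fun x => isEmptyElim x, fun a => isEmptyElim a, ?_,
      fun g x hx => absurd hx (Set.notMem_empty x),
      fun x hx => absurd hx (Set.notMem_empty x)⟩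
    rw [Set.range_eq_empty]
    exact htE.symm
  · -- nonempty case
    obtain ⟨x₀, hx₀s, hmax⟩ : ∃ x₀ ∈ s, ∀ x ∈ s, Nat.card (stabP φ x) ≤ Nat.card (stabP φ x₀) := by
      obtain ⟨x₀, h1, h2⟩ := (s.toFinite.toFinset).exists_max_image
        (fun x => Nat.card (stabP φ x)) (by simpa using hsne)
      exact ⟨x₀, by simpa using h1, fun x hx => h2 x (by simpa using hx)⟩
    have hc₀fix : ∀ g ∈ stabP φ x₀, χ g (p x₀) = p x₀ := by
      intro g hg
      rw [← hp g x₀, stabP_mem.mp hg]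
    have hmH := hm (stabP φ x₀) (p x₀) hc₀fix
    have htne : ({y | y ∈ t ∧ q y = p x₀ ∧ ∀ g ∈ stabP φ x₀, ψ g y = y}).Nonempty := by
      rw [← Set.ncard_pos (Set.toFinite _), ← hmH, Set.ncard_pos (Set.toFinite _)]
      exact ⟨x₀, hx₀s, rfl, fun g hg => stabP_mem.mp hg⟩
    obtain ⟨y₀, hy₀t, hqy₀, hy₀fix⟩ := htne
    have hHK : stabP φ x₀ ≤ stabP ψ y₀ := fun g hg => stabP_mem.mpr (hy₀fix g hg)
    have hKfixc : ∀ g ∈ stabP ψ y₀, χ g (p x₀) = p x₀ := by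
      intro g hg
      rw [← hqy₀, ← hq, stabP_mem.mp hg]
    have hmK := hm (stabP ψ y₀) (p x₀) hKfixc
    have hsne2 : ({x | x ∈ s ∧ p x = p x₀ ∧ ∀ g ∈ stabP ψ y₀, φ g x = x}).Nonempty := by
      rw [← Set.ncard_pos (Set.toFinite _), hmK, Set.ncard_pos (Set.toFinite _)]
      exact ⟨y₀, hy₀t, hqy₀, fun g hg => stabP_mem.mp hg⟩
    obtain ⟨x₁, hx₁s, -, hx₁fix⟩ := hsne2
    have hKx₁ : stabP ψ y₀ ≤ stabP φ x₁ := fun g hg => stabP_mem.mpr (hx₁fix g hg)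
    have hstabeq : stabP φ x₀ = stabP ψ y₀ :=
      stabP_eq_of_le_of_card hHK
        (le_trans (Nat.card_le_card_of_injective _ (Subgroup.inclusion_injective hKx₁))
          (hmax x₁ hx₁s))
    set orbX : Set X := Set.range (fun g => φ g x₀) with horbX
    set orbY : Set Y := Set.range (fun g => ψ g y₀) with horbY
    set u : X → Y := fun x => if h : ∃ g : G, φ g x₀ = x then ψ h.choose y₀ else y₀ with hu
    have hwd : ∀ g g' : G, φ g x₀ = φ g' x₀ → ψ g y₀ = ψ g' y₀ := by
      intro g g' hgg
      have hmem : g'⁻¹ * g ∈ stabP φ x₀ := by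
        rw [stabP_mem, map_mul, Equiv.Perm.mul_apply, hgg, map_inv]
        exact Equiv.Perm.inv_eq_iff_eq.mpr rfl
      have h2 : ψ (g'⁻¹ * g) y₀ = y₀ := stabP_mem.mp (hstabeq ▸ hmem)
      calc ψ g y₀ = ψ (g' * (g'⁻¹ * g)) y₀ := by rw [mul_inv_cancel_left]
        _ = ψ g' (ψ (g'⁻¹ * g) y₀) := by rw [map_mul, Equiv.Perm.mul_apply]
        _ = ψ g' y₀ := by rw [h2]
    have hwd' : ∀ g g' : G, ψ g y₀ = ψ g' y₀ → φ g x₀ = φ g' x₀ := by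
      intro g g' hgg
      have hmem : g'⁻¹ * g ∈ stabP ψ y₀ := by
        rw [stabP_mem, map_mul, Equiv.Perm.mul_apply, hgg, map_inv]
        exact Equiv.Perm.inv_eq_iff_eq.mpr rfl
      have h2 : φ (g'⁻¹ * g) x₀ = x₀ := stabP_mem.mp (hstabeq ▸ hmem)
      calc φ g x₀ = φ (g' * (g'⁻¹ * g)) x₀ := by rw [mul_inv_cancel_left]
        _ = φ g' (φ (g'⁻¹ * g) x₀) := by rw [map_mul, Equiv.Perm.mul_apply]
        _ = φ g' x₀ := by rw [h2]
    have hu_apply : ∀ g : G, u (φ g x₀) = ψ g y₀ := by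
      intro g
      have hex : ∃ g' : G, φ g' x₀ = φ g x₀ := ⟨g, rfl⟩
      rw [hu]
      simp only [dif_pos hex]
      exact hwd _ _ hex.choose_spec
    have hfix_transfer : ∀ g h : G, φ h (φ g x₀) = φ g x₀ ↔ ψ h (ψ g y₀) = ψ g y₀ := by
      intro g h
      rw [← conj_mem_stabP (φ := φ) g h, ← conj_mem_stabP (φ := ψ) g h, hstabeq]
    have horbXs : orbX ⊆ s := by rintro x ⟨g, rfl⟩; exact hs g x₀ hx₀s
    have horbYt : orbY ⊆ t := by rintro y ⟨g, rfl⟩; exact ht g y₀ hy₀t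
    have hx₀orb : x₀ ∈ orbX := ⟨1, by simp⟩
    have horbX_mem : ∀ (g : G) (x : X), φ g x ∈ orbX ↔ x ∈ orbX := by
      intro g x
      constructor
      · rintro ⟨g', hg'⟩
        refine ⟨g⁻¹ * g', ?_⟩
        simp only at hg' ⊢
        rw [map_mul, Equiv.Perm.mul_apply, hg', map_inv]
        exact Equiv.Perm.inv_eq_iff_eq.mpr rfl
      · rintro ⟨g', rfl⟩
        exact ⟨g * g', by simp only [map_mul, Equiv.Perm.mul_apply]⟩
    have horbY_mem : ∀ (g : G) (y : Y), ψ g y ∈ orbY ↔ y ∈ orbY := by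
      intro g y
      constructor
      · rintro ⟨g', hg'⟩
        refine ⟨g⁻¹ * g', ?_⟩
        simp only at hg' ⊢
        rw [map_mul, Equiv.Perm.mul_apply, hg', map_inv]
        exact Equiv.Perm.inv_eq_iff_eq.mpr rfl
      · rintro ⟨g', rfl⟩
        exact ⟨g * g', by simp only [map_mul, Equiv.Perm.mul_apply]⟩
    -- the orbit fixed-fiber sets are in bijection via u
    have horbcount : ∀ (H' : Subgroup G) (c : C),
        {y | y ∈ orbY ∧ q y = c ∧ ∀ g ∈ H', ψ g y = y}.ncard
          = {x | x ∈ orbX ∧ p x = c ∧ ∀ g ∈ H', φ g x = x}.ncard := by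
      intro H' c
      have himg : {y | y ∈ orbY ∧ q y = c ∧ ∀ g ∈ H', ψ g y = y}
          = u '' {x | x ∈ orbX ∧ p x = c ∧ ∀ g ∈ H', φ g x = x} := by
        ext y
        constructor
        · rintro ⟨⟨g, rfl⟩, hqc, hfy⟩
          refine ⟨φ g x₀, ⟨⟨g, rfl⟩, ?_, fun h hh => (hfix_transfer g h).mpr (hfy h hh)⟩,
            hu_apply g⟩
          rw [hp, ← hqy₀, ← hq]
          exact hqc
        · rintro ⟨x, ⟨⟨g, rfl⟩, hpc, hfx⟩, rfl⟩
          simp only [Set.mem_setOf_eq, hu_apply g]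
          refine ⟨⟨g, rfl⟩, ?_, fun h hh => (hfix_transfer g h).mp (hfx h hh)⟩
          rw [hq, hqy₀, ← hp]
          exact hpc
      have hio : Set.InjOn u {x | x ∈ orbX ∧ p x = c ∧ ∀ g ∈ H', φ g x = x} := by
        rintro x ⟨⟨g, rfl⟩, -⟩ x' ⟨⟨g', rfl⟩, -⟩ hxy
        rw [hu_apply g, hu_apply g'] at hxy
        exact hwd' g g' hxy
      rw [himg, Set.ncard_image_of_injOn hio]
    -- new sets
    have hs'inv : ∀ (g : G) (x : X), x ∈ s \ orbX → φ g x ∈ s \ orbX := by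
      rintro g x ⟨h1, h2⟩
      exact ⟨hs g x h1, fun hc => h2 ((horbX_mem g x).mp hc)⟩
    have ht'inv : ∀ (g : G) (y : Y), y ∈ t \ orbY → ψ g y ∈ t \ orbY := by
      rintro g y ⟨h1, h2⟩
      exact ⟨ht g y h1, fun hc => h2 ((horbY_mem g y).mp hc)⟩
    have hm' : ∀ (H' : Subgroup G) (c : C), (∀ g ∈ H', χ g c = c) →
        {x | x ∈ s \ orbX ∧ p x = c ∧ ∀ g ∈ H', φ g x = x}.ncard
          = {y | y ∈ t \ orbY ∧ q y = c ∧ ∀ g ∈ H', ψ g y = y}.ncard := by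
      intro H' c hcfix
      have hsubX : {x | x ∈ orbX ∧ p x = c ∧ ∀ g ∈ H', φ g x = x}
          ⊆ {x | x ∈ s ∧ p x = c ∧ ∀ g ∈ H', φ g x = x} :=
        fun x ⟨h1, h2⟩ => ⟨horbXs h1, h2⟩
      have hsubY : {y | y ∈ orbY ∧ q y = c ∧ ∀ g ∈ H', ψ g y = y}
          ⊆ {y | y ∈ t ∧ q y = c ∧ ∀ g ∈ H', ψ g y = y} :=
        fun y ⟨h1, h2⟩ => ⟨horbYt h1, h2⟩
      have hsetX : {x | x ∈ s \ orbX ∧ p x = c ∧ ∀ g ∈ H', φ g x = x}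
          = {x | x ∈ s ∧ p x = c ∧ ∀ g ∈ H', φ g x = x}
            \ {x | x ∈ orbX ∧ p x = c ∧ ∀ g ∈ H', φ g x = x} := by
        ext x
        simp only [Set.mem_setOf_eq, Set.mem_diff]
        tauto
      have hsetY : {y | y ∈ t \ orbY ∧ q y = c ∧ ∀ g ∈ H', ψ g y = y}
          = {y | y ∈ t ∧ q y = c ∧ ∀ g ∈ H', ψ g y = y}
            \ {y | y ∈ orbY ∧ q y = c ∧ ∀ g ∈ H', ψ g y = y} := by
        ext y
        simp only [Set.mem_setOf_eq, Set.mem_diff]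
        tauto
      rw [hsetX, hsetY, Set.ncard_diff hsubX (Set.toFinite _),
        Set.ncard_diff hsubY (Set.toFinite _), hm H' c hcfix, horbcount H' c]
    -- recursion
    have hlt : (s \ orbX).ncard < n := by
      rw [← hcard]
      refine Set.ncard_lt_ncard ?_ s.toFinite
      exact ⟨Set.diff_subset, fun hsub => (hsub hx₀s).2 hx₀orb⟩
    obtain ⟨F', hF'inj, hF'rng, hF'eqv, hF'fib⟩ :=
      IH _ hlt (s \ orbX) (t \ orbY) hs'inv ht'inv hm' rfl
    refine ⟨fun x => if h : (x : X) ∈ orbX then u x else F' ⟨x, x.2, h⟩, ?_, ?_, ?_, ?_⟩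
    · -- injective
      rintro ⟨a, ha⟩ ⟨b, hb⟩ hab
      simp only at hab
      by_cases hao : a ∈ orbX <;> by_cases hbo : b ∈ orbX
      · rw [dif_pos hao, dif_pos hbo] at hab
        obtain ⟨g, rfl⟩ := hao
        obtain ⟨g', rfl⟩ := hbo
        simp only at hab ⊢
        rw [hu_apply g, hu_apply g'] at hab
        exact Subtype.ext (hwd' g g' hab)
      · rw [dif_pos hao, dif_neg hbo] at hab
        obtain ⟨g, rfl⟩ := hao
        simp only [hu_apply g] at hab
        have h1 : F' ⟨b, hb, hbo⟩ ∈ t \ orbY := hF'rng ▸ Set.mem_range_self _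
        exact absurd (hab ▸ h1.2) (by simp; exact ⟨g, rfl⟩)
      · rw [dif_neg hao, dif_pos hbo] at hab
        obtain ⟨g, rfl⟩ := hbo
        simp only [hu_apply g] at hab
        have h1 : F' ⟨a, ha, hao⟩ ∈ t \ orbY := hF'rng ▸ Set.mem_range_self _
        exact absurd (hab ▸ h1.2) (by simp; exact ⟨g, rfl⟩)
      · rw [dif_neg hao, dif_neg hbo] at hab
        have h2 : a = b := congrArg Subtype.val (hF'inj hab)
        exact Subtype.ext h2
    · -- range = t
      apply Set.eq_of_subset_of_subset
      · rintro y ⟨⟨x, hx⟩, rfl⟩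
        simp only
        by_cases hxo : x ∈ orbX
        · rw [dif_pos hxo]
          obtain ⟨g, rfl⟩ := hxo
          simp only [hu_apply g]
          exact ht g y₀ hy₀t
        · rw [dif_neg hxo]
          have h1 : F' ⟨x, hx, hxo⟩ ∈ t \ orbY := hF'rng ▸ Set.mem_range_self _
          exact h1.1
      · intro y hyt
        by_cases hyo : y ∈ orbY
        · obtain ⟨g, rfl⟩ := hyo
          refine ⟨⟨φ g x₀, horbXs ⟨g, rfl⟩⟩, ?_⟩
          simp only [dif_pos (show φ g x₀ ∈ orbX from ⟨g, rfl⟩)]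
          exact hu_apply g
        · have : y ∈ t \ orbY := ⟨hyt, hyo⟩
          rw [← hF'rng] at this
          obtain ⟨⟨z, hz⟩, rfl⟩ := this
          refine ⟨⟨z, hz.1⟩, ?_⟩
          simp only [dif_neg hz.2]
    · -- equivariance
      intro g x hx
      simp only
      by_cases hxo : x ∈ orbX
      · rw [dif_pos hxo, dif_pos ((horbX_mem g x).mpr hxo)]
        obtain ⟨g₁, rfl⟩ := hxo
        simp only [hu_apply g₁]
        have : φ g (φ g₁ x₀) = φ (g * g₁) x₀ := by
          rw [map_mul, Equiv.Perm.mul_apply]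
        rw [this, hu_apply (g * g₁), map_mul, Equiv.Perm.mul_apply]
      · rw [dif_neg hxo, dif_neg (fun hc => hxo ((horbX_mem g x).mp hc))]
        have := hF'eqv g x ⟨hx, hxo⟩
        convert this using 2
    · -- fiber
      intro x hx
      simp only
      by_cases hxo : x ∈ orbX
      · rw [dif_pos hxo]
        obtain ⟨g, rfl⟩ := hxo
        simp only [hu_apply g]
        rw [hq, hqy₀, ← hp]
      · rw [dif_neg hxo]
        exact hF'fib x ⟨hx, hxo⟩

lemma rel_marks (φ : G →* Equiv.Perm X) (ψ : G →* Equiv.Perm Y) (χ : G →* Equiv.Perm C)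
    (p : X → C) (q : Y → C)
    (hp : ∀ g x, p (φ g x) = χ g (p x)) (hq : ∀ g y, q (ψ g y) = χ g (q y))
    (hm : ∀ (H : Subgroup G) (c : C), (∀ g ∈ H, χ g c = c) →
      {x : X | p x = c ∧ ∀ g ∈ H, φ g x = x}.ncard
        = {y : Y | q y = c ∧ ∀ g ∈ H, ψ g y = y}.ncard) :
    ∃ e : X ≃ Y, (∀ g x, e (φ g x) = ψ g (e x)) ∧ ∀ x, q (e x) = p x := by
  obtain ⟨F, hinj, hrng, heqv, hfib⟩ :=
    rel_marks_aux φ ψ χ p q hp hq (Set.univ : Set X).ncard Set.univ Set.univ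
      (fun _ _ _ => Set.mem_univ _) (fun _ _ _ => Set.mem_univ _)
      (by
        intro H c hc
        have e1 : {x : X | x ∈ Set.univ ∧ p x = c ∧ ∀ g ∈ H, φ g x = x}
            = {x : X | p x = c ∧ ∀ g ∈ H, φ g x = x} := by ext x; simp
        have e2 : {y : Y | y ∈ Set.univ ∧ q y = c ∧ ∀ g ∈ H, ψ g y = y}
            = {y : Y | q y = c ∧ ∀ g ∈ H, ψ g y = y} := by ext y; simp
        rw [e1, e2]
        exact hm H c hc) rfl
  have hbij : Function.Bijective (fun x : X => F ⟨x, Set.mem_univ x⟩) := by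
    constructor
    · intro a b hab
      have := hinj hab
      exact congrArg Subtype.val this
    · intro y
      have : y ∈ Set.range F := hrng ▸ Set.mem_univ y
      obtain ⟨⟨x, hx⟩, rfl⟩ := this
      exact ⟨x, rfl⟩
  refine ⟨Equiv.ofBijective _ hbij, ?_, ?_⟩
  · intro g x
    simp only [Equiv.ofBijective_apply]
    exact heqv g x (Set.mem_univ x)
  · intro x
    simp only [Equiv.ofBijective_apply]
    exact hfib x (Set.mem_univ x)

end Marks

lemma transform_one {A B C : Type} (f : A × C ≃ B × C) : transform f 1 1 1 = f := by
  ext ⟨a, c⟩ <;> simp [transform, Equiv.Perm.one_symm]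

lemma transform_mul {A B C : Type} (f : A × C ≃ B × C)
    (α₁ α₂ : Equiv.Perm A) (β₁ β₂ : Equiv.Perm B) (γ₁ γ₂ : Equiv.Perm C) :
    transform f (α₁ * α₂) (β₁ * β₂) (γ₁ * γ₂)
      = transform (transform f α₂ β₂ γ₂) α₁ β₁ γ₁ := by
  ext ⟨a, c⟩ <;>
    simp [transform, Equiv.Perm.mul_apply, Equiv.prodCongr_symm, Equiv.Perm.mul_def]

section App

variable {A B C : Type}

/-- The full stabilizer of `f` (γ unrestricted). -/
def fullStab (f : A × C ≃ B × C) : Subgroup (Equiv.Perm A × Equiv.Perm B × Equiv.Perm C) where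
  carrier := {g | transform f g.1 g.2.1 g.2.2 = f}
  one_mem' := transform_one f
  mul_mem' := by
    rintro g h hg hh
    show transform f (g.1 * h.1) (g.2.1 * h.2.1) (g.2.2 * h.2.2) = f
    rw [transform_mul, hh, hg]
  inv_mem' := by
    rintro g hg
    show transform f (g.1⁻¹) (g.2.1⁻¹) (g.2.2⁻¹) = f
    have h2 := transform_mul f g.1⁻¹ g.1 g.2.1⁻¹ g.2.1 g.2.2⁻¹ g.2.2
    rw [hg, inv_mul_cancel, inv_mul_cancel, inv_mul_cancel, transform_one] at h2
    exact h2.symm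

def phiA (f : A × C ≃ B × C) : fullStab f →* Equiv.Perm (A × C) :=
  MonoidHom.mk' (fun g => Equiv.prodCongr (g : Equiv.Perm A × Equiv.Perm B × Equiv.Perm C).1
    (g : Equiv.Perm A × Equiv.Perm B × Equiv.Perm C).2.2) (fun _ _ => Equiv.ext fun _ => rfl)

def phiB (f : A × C ≃ B × C) : fullStab f →* Equiv.Perm (B × C) :=
  MonoidHom.mk' (fun g => Equiv.prodCongr (g : Equiv.Perm A × Equiv.Perm B × Equiv.Perm C).2.1
    (g : Equiv.Perm A × Equiv.Perm B × Equiv.Perm C).2.2) (fun _ _ => Equiv.ext fun _ => rfl)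

def phiC (f : A × C ≃ B × C) : fullStab f →* Equiv.Perm C :=
  MonoidHom.mk' (fun g => (g : Equiv.Perm A × Equiv.Perm B × Equiv.Perm C).2.2)
    (fun _ _ => rfl)

lemma fullStab_equivariant (f : A × C ≃ B × C) (g : fullStab f) (x : A × C) :
    f (phiA f g x) = phiB f g (f x) := by
  have h3 := Equiv.ext_iff.mp g.2 (phiA f g x)
  simp only [transform, Equiv.trans_apply] at h3
  have h4 : (Equiv.prodCongr (g : Equiv.Perm A × Equiv.Perm B × Equiv.Perm C).1
      (g : Equiv.Perm A × Equiv.Perm B × Equiv.Perm C).2.2).symm (phiA f g x) = x :=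
    Equiv.symm_apply_apply _ x
  rw [h4] at h3
  exact h3.symm

lemma exists_parallel_equivariant [Finite A] [Finite B] [Finite C]
    (f : A × C ≃ B × C) :
    ∃ e : A × C ≃ B × C, (∀ x : A × C, (e x).2 = x.2) ∧
      ∀ (α : Equiv.Perm A) (β : Equiv.Perm B) (γ : Equiv.Perm C),
        transform f α β γ = f → transform e α β γ = e := by
  have hm : ∀ (H : Subgroup (fullStab f)) (c : C), (∀ g ∈ H, phiC f g c = c) →
      {x : A × C | x.2 = c ∧ ∀ g ∈ H, phiA f g x = x}.ncard
        = {y : B × C | y.2 = c ∧ ∀ g ∈ H, phiB f g y = y}.ncard := by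
    intro H c hc
    rw [← Nat.card_coe_set_eq, ← Nat.card_coe_set_eq]
    have eA : {x : A × C // x.2 = c ∧ ∀ g ∈ H, phiA f g x = x}
        ≃ {a : A // ∀ g ∈ H, (g : Equiv.Perm A × Equiv.Perm B × Equiv.Perm C).1 a = a} :=
      { toFun := fun x => ⟨x.1.1, fun g hg => congrArg Prod.fst (x.2.2 g hg)⟩
        invFun := fun a => ⟨(a.1, c), rfl, fun g hg => Prod.ext (a.2 g hg) (hc g hg)⟩
        left_inv := fun x => Subtype.ext (Prod.ext rfl x.2.1.symm)
        right_inv := fun a => rfl }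
    have eB : {y : B × C // y.2 = c ∧ ∀ g ∈ H, phiB f g y = y}
        ≃ {b : B // ∀ g ∈ H, (g : Equiv.Perm A × Equiv.Perm B × Equiv.Perm C).2.1 b = b} :=
      { toFun := fun y => ⟨y.1.1, fun g hg => congrArg Prod.fst (y.2.2 g hg)⟩
        invFun := fun b => ⟨(b.1, c), rfl, fun g hg => Prod.ext (b.2 g hg) (hc g hg)⟩
        left_inv := fun y => Subtype.ext (Prod.ext rfl y.2.1.symm)
        right_inv := fun b => rfl }
    have h5 : Nat.card ↥{x : A × C | x.2 = c ∧ ∀ g ∈ H, phiA f g x = x}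
        = Nat.card {a : A // ∀ g ∈ H, (g : Equiv.Perm A × Equiv.Perm B × Equiv.Perm C).1 a = a} :=
      Nat.card_congr eA
    have h6 : Nat.card ↥{y : B × C | y.2 = c ∧ ∀ g ∈ H, phiB f g y = y}
        = Nat.card {b : B // ∀ g ∈ H, (g : Equiv.Perm A × Equiv.Perm B × Equiv.Perm C).2.1 b = b} :=
      Nat.card_congr eB
    rw [h5, h6]
    have hsplitA : {x : A × C // ∀ g ∈ H, phiA f g x = x}
        ≃ {a : A // ∀ g ∈ H, (g : Equiv.Perm A × Equiv.Perm B × Equiv.Perm C).1 a = a}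
          × {c' : C // ∀ g ∈ H, (g : Equiv.Perm A × Equiv.Perm B × Equiv.Perm C).2.2 c' = c'} :=
      (Equiv.subtypeEquivRight (fun x => by
        constructor
        · intro h
          exact ⟨fun g hg => congrArg Prod.fst (h g hg), fun g hg => congrArg Prod.snd (h g hg)⟩
        · intro h g hg
          exact Prod.ext (h.1 g hg) (h.2 g hg))).trans Equiv.subtypeProdEquivProd
    have hsplitB : {y : B × C // ∀ g ∈ H, phiB f g y = y}
        ≃ {b : B // ∀ g ∈ H, (g : Equiv.Perm A × Equiv.Perm B × Equiv.Perm C).2.1 b = b}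
          × {c' : C // ∀ g ∈ H, (g : Equiv.Perm A × Equiv.Perm B × Equiv.Perm C).2.2 c' = c'} :=
      (Equiv.subtypeEquivRight (fun y => by
        constructor
        · intro h
          exact ⟨fun g hg => congrArg Prod.fst (h g hg), fun g hg => congrArg Prod.snd (h g hg)⟩
        · intro h g hg
          exact Prod.ext (h.1 g hg) (h.2 g hg))).trans Equiv.subtypeProdEquivProd
    have hfe : {x : A × C // ∀ g ∈ H, phiA f g x = x}
        ≃ {y : B × C // ∀ g ∈ H, phiB f g y = y} :=
      Equiv.subtypeEquiv f (fun x => by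
        constructor
        · intro h g hg
          rw [← fullStab_equivariant f g x, h g hg]
        · intro h g hg
          have := fullStab_equivariant f g x
          rw [h g hg] at this
          exact f.injective this)
    have key := Nat.card_congr ((hsplitA.symm.trans hfe).trans hsplitB)
    rw [Nat.card_prod, Nat.card_prod] at key
    have hne : Nonempty
        {c' : C // ∀ g ∈ H, (g : Equiv.Perm A × Equiv.Perm B × Equiv.Perm C).2.2 c' = c'} :=
      ⟨⟨c, fun g hg => hc g hg⟩⟩
    have hpos : 0 < Nat.card
        {c' : C // ∀ g ∈ H, (g : Equiv.Perm A × Equiv.Perm B × Equiv.Perm C).2.2 c' = c'} :=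
      Nat.card_pos
    exact Nat.eq_of_mul_eq_mul_right hpos key
  obtain ⟨e, heqv, hfib⟩ := rel_marks (phiA f) (phiB f) (phiC f) Prod.snd Prod.snd
    (fun g x => rfl) (fun g y => rfl) hm
  refine ⟨e, hfib, ?_⟩
  intro α β γ htr
  have hg : (α, β, γ) ∈ fullStab f := htr
  refine Equiv.ext fun x => ?_
  show (Equiv.prodCongr β γ) (e ((Equiv.prodCongr α γ).symm x)) = e x
  have h1 : (Equiv.prodCongr α γ).symm x = phiA f (⟨(α, β, γ), hg⟩ : fullStab f)⁻¹ x := rfl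
  rw [h1]
  have h2 := heqv (⟨(α, β, γ), hg⟩ : fullStab f) (phiA f (⟨(α, β, γ), hg⟩ : fullStab f)⁻¹ x)
  have h3 : phiA f (⟨(α, β, γ), hg⟩ : fullStab f) (phiA f (⟨(α, β, γ), hg⟩ : fullStab f)⁻¹ x)
      = x := by
    rw [← Equiv.Perm.mul_apply, ← map_mul, mul_inv_cancel, map_one, Equiv.Perm.one_apply]
  rw [h3] at h2
  rw [h2]
  rfl

end App


theorem finitely_cancelling_iff_parallel {C : Type} [Finite C] [Nonempty C]
    (Γ : Subgroup (Equiv.Perm C)) :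
    FinitelyCancelling C Γ ↔
      ∀ (A B : Type), Finite A → Finite B → ∀ f : A × C ≃ B × C,
        (∀ p : A × C, (f p).2 = p.2) → ∃ h : A ≃ B, IsEquivQuotient Γ f h := by
  constructor
  · intro hfc A B hA hB f _
    exact hfc A B hA hB f
  · intro hpar A B hA hB f
    haveI := hA
    haveI := hB
    obtain ⟨e, hfib, hstab⟩ := exists_parallel_equivariant f
    obtain ⟨h, hq⟩ := hpar A B hA hB e hfib
    exact ⟨h, fun α β γ hγ htr => hq α β γ hγ (hstab α β γ htr)⟩
end

section
/- (Feldman–Propp) Let C be a nonempty finite set and Γ a subgroup of the symmetric group S(C). If Γ contains a nontrivial semiregular subgroup, i.e., a subgroup H ≠ {id} such that every non-identity element of H has no fixed point in C, then Γ is not finitely cancelling. -/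
theorem semiregular_subgroup_not_finitely_cancelling {C : Type} [Finite C] [Nonempty C]
    (Γ H : Subgroup (Equiv.Perm C)) (hHΓ : H ≤ Γ) (hH : H ≠ ⊥)
    (hsemi : ∀ γ ∈ H, γ ≠ 1 → ∀ c : C, γ c ≠ c) :
    ¬ FinitelyCancelling C Γ := by
  intro hFC
  obtain ⟨γ₀, hγH, hγ1⟩ : ∃ g ∈ H, g ≠ 1 := by
    by_contra hc
    push_neg at hc
    exact hH ((Subgroup.eq_bot_iff_forall H).mpr hc)
  set n := orderOf γ₀ with hn
  have hnpos : 0 < n := orderOf_pos γ₀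
  haveI : NeZero n := ⟨hnpos.ne'⟩
  have hn1 : n ≠ 1 := fun h => hγ1 (orderOf_eq_one_iff.mp h)
  -- key: γ₀^k c = γ₀^k' c → (k : ZMod n) = k'
  have key : ∀ (k k' : ℕ) (c : C), (γ₀ ^ k) c = (γ₀ ^ k') c → (k : ZMod n) = (k' : ZMod n) := by
    have mono : ∀ (k k' : ℕ) (c : C), k ≤ k' → (γ₀ ^ k) c = (γ₀ ^ k') c →
        (k : ZMod n) = (k' : ZMod n) := by
      intro k k' c hle heq
      obtain ⟨d, rfl⟩ := Nat.exists_eq_add_of_le hle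
      have hfix : (γ₀ ^ d) ((γ₀ ^ k) c) = (γ₀ ^ k) c := by
        have e : γ₀ ^ (k + d) = γ₀ ^ d * γ₀ ^ k := by
          rw [← pow_add, Nat.add_comm]
        rw [e] at heq
        simpa [Equiv.Perm.mul_apply] using heq.symm
      have hd1 : γ₀ ^ d = 1 := by
        by_contra hne
        exact hsemi _ (pow_mem hγH d) hne _ hfix
      have hdvd : n ∣ d := orderOf_dvd_of_pow_eq_one hd1
      obtain ⟨m, rfl⟩ := hdvd
      push_cast
      simp [ZMod.natCast_self]
    intro k k' c heq
    rcases le_total k k' with h | h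
    · exact mono k k' c h heq
    · exact (mono k' k c h heq.symm).symm
  -- setoid of γ₀-orbits
  let s : Setoid C := ⟨fun x y => ∃ k : ℕ, (γ₀ ^ k) y = x, by
    constructor
    · intro x; exact ⟨0, by simp⟩
    · rintro x y ⟨k, rfl⟩
      refine ⟨k * (n - 1), ?_⟩
      have e1 : (γ₀ ^ (k * (n-1))) ((γ₀ ^ k) y) = (γ₀ ^ (k * (n-1) + k)) y := by
        rw [pow_add]; simp [Equiv.Perm.mul_apply]
      rw [e1]
      have e2 : k * (n - 1) + k = n * k := by
        have h3 : (n - 1) + 1 = n := Nat.succ_pred_eq_of_pos hnpos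
        calc k * (n - 1) + k = k * ((n - 1) + 1) := (Nat.mul_succ k (n-1)).symm
        _ = n * k := by rw [h3, Nat.mul_comm]
      rw [e2, pow_mul, pow_orderOf_eq_one, one_pow]
      simp
    · rintro x y z ⟨k, rfl⟩ ⟨m, rfl⟩
      exact ⟨k + m, by rw [pow_add]; simp [Equiv.Perm.mul_apply]⟩⟩
  let rep : C → C := fun c => (Quotient.mk s c).out
  have hrepex : ∀ c, ∃ k : ℕ, (γ₀ ^ k) (rep c) = c := by
    intro c
    exact s.symm (Quotient.exact (Quotient.out_eq (Quotient.mk s c)))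
  have hrepγ : ∀ c, rep (γ₀ c) = rep c := by
    intro c
    have : Quotient.mk s (γ₀ c) = Quotient.mk s c := Quotient.sound ⟨1, by simp⟩
    simp only [rep, this]
  let φ : C → ZMod n := fun c => ((hrepex c).choose : ZMod n)
  have hφ : ∀ c, φ (γ₀ c) = φ c + 1 := by
    intro c
    have h1 : (γ₀ ^ (hrepex (γ₀ c)).choose) (rep (γ₀ c)) = γ₀ c := (hrepex (γ₀ c)).choose_spec
    have h2 : (γ₀ ^ ((hrepex c).choose + 1)) (rep (γ₀ c)) = γ₀ c := by
      rw [hrepγ, pow_succ', Equiv.Perm.mul_apply, (hrepex c).choose_spec]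
    have := key _ _ _ (h1.trans h2.symm)
    push_cast at this
    exact this
  -- the counterexample bijection
  let f : ZMod n × C ≃ ZMod n × C :=
    { toFun := fun p => (p.1 + φ p.2, p.2)
      invFun := fun p => (p.1 - φ p.2, p.2)
      left_inv := fun p => by simp
      right_inv := fun p => by simp }
  let β : Equiv.Perm (ZMod n) := Equiv.addRight (1 : ZMod n)
  obtain ⟨h, hq⟩ := hFC (ZMod n) (ZMod n) (Finite.of_fintype _) (Finite.of_fintype _) f
  have hsym : transform f 1 β γ₀ = f := by
    apply Equiv.ext
    rintro ⟨a, c⟩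
    simp only [transform, f, β, Equiv.trans_apply, Equiv.prodCongr_apply, Equiv.prodCongr_symm,
      Equiv.coe_fn_mk, Prod.map, Equiv.Perm.coe_one, Equiv.symm_symm, Equiv.coe_addRight]
    simp only [Equiv.Perm.one_symm, Equiv.Perm.coe_one, id_eq]
    have e : φ c = φ (γ₀.symm c) + 1 := by
      conv_lhs => rw [← Equiv.apply_symm_apply γ₀ c]
      exact hφ _
    rw [Equiv.apply_symm_apply]
    exact Prod.ext (by rw [e]; ring) rfl
  have := hq 1 β γ₀ (hHΓ hγH) hsym
  have h10 : (1 : ZMod n) = 0 := by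
    have := congrArg (fun e => e.toFun (0 : ZMod n)) this
    simp only [transformQ, Equiv.trans_apply, β, Equiv.coe_addRight] at this
    simpa [Equiv.Perm.one_symm] using this
  have : n ∣ 1 := by
    have : ((1 : ℕ) : ZMod n) = 0 := by exact_mod_cast h10
    exact (ZMod.natCast_eq_zero_iff 1 n).mp this
  exact hn1 (Nat.dvd_one.mp this)
end

section
/- Let C be a finite set with at least two elements. Then the full symmetric group S(C) is not finitely cancelling: there exist finite sets A and B and a bijection f : A × C → B × C that admits no S(C)-equivariant quotient. -/
theorem full_symmetric_group_not_finitely_cancelling {C : Type} [Finite C]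
    (hC : 1 < Nat.card C) :
    ∃ (A B : Type), Finite A ∧ Finite B ∧
      ∃ f : A × C ≃ B × C, ∀ h : A ≃ B,
        ¬ IsEquivQuotient (⊤ : Subgroup (Equiv.Perm C)) f h := by
  set m := Nat.card C with hm
  haveI : NeZero m := ⟨by omega⟩
  haveI : Fact (1 < m) := ⟨hC⟩
  obtain ⟨e⟩ : Nonempty (C ≃ ZMod m) :=
    Finite.card_eq.mp (by rw [Nat.card_zmod])
  refine ⟨ZMod m, ZMod m, inferInstance, inferInstance, ?_⟩
  refine ⟨⟨fun p => (p.1 - e p.2, p.2), fun p => (p.1 + e p.2, p.2),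
    fun p => by simp, fun p => by simp⟩, ?_⟩
  intro h hquot
  have key := hquot (Equiv.addRight (1 : ZMod m)) (Equiv.refl _)
    (e.trans ((Equiv.addRight (1 : ZMod m)).trans e.symm)) trivial ?_
  · have h0 := congrArg (fun (k : ZMod m ≃ ZMod m) => k 0) key
    simp [transformQ] at h0
  · ext ⟨a, c⟩
    · simp [transform]
    · simp [transform]
end

section
/- Let G be a finite group, set A = B = C = G, and let f : G × G → G × G be the bijection f(x,y) = (xy, y). If h : G → G is a bijection that is an {id}-equivariant quotient of f (i.e., for all α, β ∈ S(G) with f_{α,β,id} = f one has h_{α,β} = h), then h(g) = g·h(1) for every g ∈ G, where 1 is the identity of G; that is, h coincides with the row f⟨h(1)⟩ of f. -/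
theorem regular_representation_quotient_is_row {G : Type} [Group G] [Finite G]
    (f : G × G ≃ G × G) (hf : ∀ x y : G, f (x, y) = (x * y, y))
    (h : G ≃ G) (hq : IsEquivQuotient (⊥ : Subgroup (Equiv.Perm G)) f h) :
    ∀ g : G, h g = g * h 1 := by
  intro g
  have key : transform f (Equiv.mulLeft g) (Equiv.mulLeft g) 1 = f := by
    apply Equiv.ext
    rintro ⟨a, c⟩
    simp [transform, hf, mul_assoc]
    rfl
  have hh := hq (Equiv.mulLeft g) (Equiv.mulLeft g) 1 (Subgroup.mem_bot.mpr rfl) key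
  have := congrArg (fun e : G ≃ G => e g) hh
  simpa [transformQ] using this.symm
end

section
/- Let G be a finite group with more than one element, set A = B = C = G, and let f : G × G → G × G be the bijection f(x,y) = (xy, y). Let Γ_r ≤ S(G) be the image of the right regular representation, i.e., the subgroup of all permutations x ↦ xg for g ∈ G. Then f admits no Γ_r-equivariant quotient; in particular, Γ_r is not finitely cancelling. -/
/-- The image of the right regular representation: all permutations `x ↦ x * g`. -/
def rightRegular (G : Type) [Group G] : Subgroup (Equiv.Perm G) where
  carrier := {σ | ∃ g : G, σ = Equiv.mulRight g}
  one_mem' := ⟨1, by ext x; simp⟩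
  mul_mem' := by
    rintro σ τ ⟨g, rfl⟩ ⟨g', rfl⟩
    exact ⟨g' * g, by ext x; simp [Equiv.Perm.mul_apply, mul_assoc]⟩
  inv_mem' := by
    rintro σ ⟨g, rfl⟩
    exact ⟨g⁻¹, by ext x; simp⟩

theorem regular_representation_no_equivariant_quotient {G : Type} [Group G] [Finite G]
    [Nontrivial G]
    (f : G × G ≃ G × G) (hf : ∀ x y : G, f (x, y) = (x * y, y)) :
    (∀ h : G ≃ G, ¬ IsEquivQuotient (rightRegular G) f h) ∧
    ¬ FinitelyCancelling G (rightRegular G) := by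
  have main : ∀ h : G ≃ G, ¬ IsEquivQuotient (rightRegular G) f h := by
    intro h hq
    obtain ⟨g, hg⟩ := exists_ne (1 : G)
    have hfix : transform f 1 (Equiv.mulRight g) (Equiv.mulRight g) = f := by
      ext ⟨a, c⟩ <;>
        simp [transform, Equiv.prodCongr, hf, mul_assoc, Equiv.Perm.one_symm, Equiv.Perm.one_apply]
    have := hq 1 (Equiv.mulRight g) (Equiv.mulRight g) ⟨g, rfl⟩ hfix
    have := congrFun (congrArg (fun e : G ≃ G => (e : G → G)) this) 1
    simp [transformQ, Equiv.Perm.one_symm, Equiv.Perm.one_apply] at this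
    exact hg this
  refine ⟨main, fun hc => ?_⟩
  obtain ⟨h, hq⟩ := hc G G inferInstance inferInstance f
  exact main h hq
end

section
/- Let C be a finite set with at least two elements and let Γ be a subgroup of S(C) that acts transitively on C. Then Γ is not finitely cancelling. -/
/-! ### Auxiliary material

We prove that two permutations of finite types having equal numbers of fixed points
for all powers are conjugate via some bijection; we find a fixed-point-free element
in a transitive subgroup via Burnside's lemma; and we construct, from a
fixed-point-free `γ` of order `n`, two explicit "Möbius" permutation types whose
products with `γ` are conjugate although one permutation has a fixed point and the
other does not. -/

open Equiv Function Finset MulAction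

section Bridge

private noncomputable def Nfix {A : Type*} [Fintype A] [DecidableEq A]
    (σ : Equiv.Perm A) (k : ℕ) : ℕ :=
  (Finset.univ.filter fun a => (σ ^ k) a = a).card

private noncomputable def Nper {A : Type*} [Fintype A] [DecidableEq A]
    (σ : Equiv.Perm A) (m : ℕ) : ℕ :=
  (Finset.univ.filter fun a => orderOf (σ.cycleOf a) = m).card

variable {A : Type*} [Fintype A] [DecidableEq A]

private lemma pow_apply_eq_iff (σ : Equiv.Perm A) (k : ℕ) (a : A) :
    (σ ^ k) a = a ↔ orderOf (σ.cycleOf a) ∣ k := by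
  by_cases h : σ a = a
  · rw [(Equiv.Perm.cycleOf_eq_one_iff σ).mpr h]
    simp [Equiv.Perm.pow_apply_eq_self_of_apply_eq_self h k]
  · have hc := Equiv.Perm.isCycle_cycleOf σ h
    have ha : σ.cycleOf a a ≠ a := by rwa [Equiv.Perm.cycleOf_apply_self]
    rw [← Equiv.Perm.cycleOf_pow_apply_self σ a k, orderOf_dvd_iff_pow_eq_one,
      hc.pow_eq_one_iff' ha]

private lemma Nfix_eq_sum (σ : Equiv.Perm A) (k : ℕ) (hk : k ≠ 0) :
    Nfix σ k = ∑ d ∈ k.divisors, Nper σ d := by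
  unfold Nfix Nper
  simp_rw [pow_apply_eq_iff]
  rw [Finset.card_eq_sum_card_fiberwise
    (f := fun a => orderOf (σ.cycleOf a)) (t := k.divisors)
    (fun a ha => Nat.mem_divisors.mpr ⟨(Finset.mem_filter.mp ha).2, hk⟩)]
  refine Finset.sum_congr rfl fun d hd => ?_
  congr 1
  ext a
  simp only [Finset.mem_filter, Finset.mem_univ, true_and, and_iff_right_iff_imp]
  intro h; rw [h]; exact (Nat.mem_divisors.mp hd).1

private lemma Nper_eq (σ : Equiv.Perm A) (m : ℕ) (hm : 2 ≤ m) :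
    Nper σ m = m * σ.cycleType.count m := by
  have hcount : σ.cycleType.count m
      = (σ.cycleFactorsFinset.filter fun c => c.support.card = m).card := by
    rw [Equiv.Perm.CycleType.count_def]
    rw [Fintype.card_congr (Equiv.subtypeSubtypeEquivSubtypeInter
      (fun c => c ∈ σ.cycleFactorsFinset) (fun c => c.support.card = m))]
    rw [Fintype.card_subtype]
    congr 1
    ext c
    simp [Finset.mem_filter]
  have hset : (Finset.univ.filter fun a => orderOf (σ.cycleOf a) = m)
      = (σ.cycleFactorsFinset.filter fun c => c.support.card = m).biUnion
          (fun c => c.support) := by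
    ext a
    simp only [Finset.mem_filter, Finset.mem_univ, true_and, Finset.mem_biUnion]
    constructor
    · intro h
      have hne : σ a ≠ a := by
        intro hfix
        rw [(Equiv.Perm.cycleOf_eq_one_iff σ).mpr hfix] at h
        simp at h; omega
      have hc := Equiv.Perm.isCycle_cycleOf σ hne
      refine ⟨σ.cycleOf a, ⟨?_, ?_⟩, ?_⟩
      · exact (Equiv.Perm.cycleOf_mem_cycleFactorsFinset_iff).mpr
          (Equiv.Perm.mem_support.mpr hne)
      · rw [← hc.orderOf]; exact h
      · exact Equiv.Perm.mem_support.mpr (by rwa [Equiv.Perm.cycleOf_apply_self])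
    · rintro ⟨c, hc, hac⟩
      obtain ⟨hcf, hcard⟩ := hc
      have : c = σ.cycleOf a := Equiv.Perm.cycle_is_cycleOf hac hcf
      rw [← this, (Equiv.Perm.mem_cycleFactorsFinset_iff.mp hcf).1.orderOf, hcard]
  rw [Nper, hset, Finset.card_biUnion, hcount]
  · rw [Finset.sum_congr rfl (fun c hc => (Finset.mem_filter.mp hc).2), Finset.sum_const,
      smul_eq_mul, mul_comm]
  · intro x hx y hy hxy
    exact Equiv.Perm.Disjoint.disjoint_support
      ((σ.cycleFactorsFinset_pairwise_disjoint) (Finset.mem_filter.mp hx).1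
        (Finset.mem_filter.mp hy).1 hxy)

private lemma cycleType_eq_of_Nfix {B : Type*} [Fintype B] [DecidableEq B]
    (σ : Equiv.Perm A) (τ : Equiv.Perm B)
    (h : ∀ k, k ≠ 0 → Nfix σ k = Nfix τ k) : σ.cycleType = τ.cycleType := by
  have key : ∀ m, m ≠ 0 → Nper σ m = Nper τ m := by
    intro m
    induction m using Nat.strong_induction_on with
    | _ m IH =>
      intro hm
      have h1 := Nfix_eq_sum σ m hm
      have h2 := Nfix_eq_sum τ m hm
      rw [h m hm, h2] at h1
      have hmem : m ∈ m.divisors := Nat.mem_divisors_self m hm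
      rw [← Finset.add_sum_erase _ _ hmem, ← Finset.add_sum_erase _ _ hmem] at h1
      have hrest : ∑ d ∈ m.divisors.erase m, Nper σ d
          = ∑ d ∈ m.divisors.erase m, Nper τ d := by
        refine Finset.sum_congr rfl fun d hd => ?_
        obtain ⟨hne, hdvd⟩ := Finset.mem_erase.mp hd
        obtain ⟨hdvd', hm0⟩ := Nat.mem_divisors.mp hdvd
        have hd0 : d ≠ 0 := by rintro rfl; exact hm (Nat.eq_zero_of_zero_dvd hdvd')
        exact IH d (lt_of_le_of_ne (Nat.le_of_dvd (Nat.pos_of_ne_zero hm) hdvd') hne) hd0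
      omega
  refine Multiset.ext.mpr fun m => ?_
  rcases lt_or_ge m 2 with hm | hm
  · rw [Multiset.count_eq_zero.mpr, Multiset.count_eq_zero.mpr]
    · intro hmem; have := Equiv.Perm.two_le_of_mem_cycleType hmem; omega
    · intro hmem; have := Equiv.Perm.two_le_of_mem_cycleType hmem; omega
  · have := key m (by omega)
    rw [Nper_eq σ m hm, Nper_eq τ m hm] at this
    exact Nat.eq_of_mul_eq_mul_left (by omega) this

end Bridge

/-- If two permutations of finite types have the same number of fixed points for
every power, they are conjugate via some bijection. -/
private theorem exists_conj_of_fixcount {A B : Type} [Finite A] [Finite B]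
    (σ : Equiv.Perm A) (τ : Equiv.Perm B)
    (h : ∀ k : ℕ, Nat.card {a : A // (σ ^ k) a = a} = Nat.card {b : B // (τ ^ k) b = b}) :
    ∃ e : A ≃ B, ∀ a, e (σ a) = τ (e a) := by
  classical
  letI := Fintype.ofFinite A
  letI := Fintype.ofFinite B
  have hcard : Fintype.card A = Fintype.card B := by
    have h0 := h 0
    rw [Nat.card_congr (Equiv.subtypeUnivEquiv (by simp)),
      Nat.card_congr (Equiv.subtypeUnivEquiv (by simp))] at h0
    simpa [Nat.card_eq_fintype_card] using h0
  obtain e₀ := Fintype.equivOfCardEq hcard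
  set τ' : Equiv.Perm A := (e₀.trans τ).trans e₀.symm with hτ'def
  have hτ'pow : ∀ (k : ℕ) (a : A), (τ' ^ k) a = e₀.symm ((τ ^ k) (e₀ a)) := by
    intro k
    induction k with
    | zero => intro a; simp
    | succ k IH =>
      intro a
      rw [pow_succ, Equiv.Perm.mul_apply, pow_succ, Equiv.Perm.mul_apply]
      have : τ' a = e₀.symm (τ (e₀ a)) := rfl
      rw [this, IH, Equiv.apply_symm_apply]
  have hNfix : ∀ k, k ≠ 0 → Nfix σ k = Nfix τ' k := by
    intro k _
    have hk := h k
    have e1 : {a : A // (τ' ^ k) a = a} ≃ {b : B // (τ ^ k) b = b} := by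
      refine Equiv.subtypeEquiv e₀ fun a => ?_
      rw [hτ'pow k a]
      exact (Equiv.symm_apply_eq e₀).trans (by rw [eq_comm])
    rw [Nat.card_congr e1.symm] at hk
    unfold Nfix
    rw [← Fintype.card_subtype, ← Fintype.card_subtype,
      ← Nat.card_eq_fintype_card, ← Nat.card_eq_fintype_card]
    exact hk
  have hct : σ.cycleType = τ'.cycleType := cycleType_eq_of_Nfix σ τ' hNfix
  obtain ⟨π, hπ⟩ := isConj_iff.mp (Equiv.Perm.isConj_of_cycleType_eq hct)
  refine ⟨(π : Equiv.Perm A).trans e₀, fun a => ?_⟩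
  have h1 : τ' (π a) = π (σ a) := by
    rw [← hπ]; simp [Equiv.Perm.mul_apply]
  simp only [Equiv.trans_apply]
  rw [← h1]
  show e₀ ((e₀.trans τ).trans e₀.symm (π a)) = τ (e₀ (π a))
  simp

/-- A transitive subgroup of permutations of a finite set with at least two elements
contains a fixed-point-free element (Jordan). -/
private lemma exists_fpf {C : Type} [Finite C] (hC : 1 < Nat.card C)
    (Γ : Subgroup (Equiv.Perm C))
    (htrans : ∀ c c' : C, ∃ γ ∈ Γ, γ c = c') :
    ∃ γ : Equiv.Perm C, γ ∈ Γ ∧ ∀ c : C, γ c ≠ c := by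
  classical
  letI : Fintype C := Fintype.ofFinite C
  haveI : Nonempty C := by
    rcases Nat.card_pos_iff.mp (by omega : 0 < Nat.card C) with ⟨h1, _⟩
    exact h1
  letI : Fintype Γ := Fintype.ofFinite Γ
  letI : ∀ g : Γ, Fintype (fixedBy C g) := fun g => Fintype.ofFinite _
  obtain ⟨c₀⟩ := ‹Nonempty C›
  letI : Fintype (Quotient (orbitRel Γ C)) := Fintype.ofFinite _
  have horb : Fintype.card (Quotient (orbitRel Γ C)) = 1 := by
    rw [Fintype.card_eq_one_iff]
    refine ⟨⟦c₀⟧, fun y => ?_⟩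
    induction y using Quotient.inductionOn with
    | h c =>
      refine Quotient.sound ?_
      change c ∈ orbit Γ c₀
      obtain ⟨γ, hγΓ, hγ⟩ := htrans c₀ c
      exact ⟨⟨γ, hγΓ⟩, hγ⟩
  have hburn := MulAction.sum_card_fixedBy_eq_card_orbits_mul_card_group Γ C
  rw [horb, one_mul] at hburn
  by_contra hcon
  push_neg at hcon
  have hge : ∀ g : Γ, 1 ≤ Fintype.card (fixedBy C g) := by
    intro g
    obtain ⟨c, hc⟩ := hcon (g : Equiv.Perm C) g.2
    exact Fintype.card_pos_iff.mpr ⟨⟨c, hc⟩⟩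
  have h1 : Fintype.card C ≤ Fintype.card (fixedBy C (1 : Γ)) := by
    refine Fintype.card_le_of_injective (fun c => ⟨c, by simp [MulAction.fixedBy]⟩) ?_
    intro x y hxy
    simpa using congrArg Subtype.val hxy
  have hsum : Fintype.card (fixedBy C (1 : Γ))
      + ∑ g ∈ Finset.univ.erase (1 : Γ), Fintype.card (fixedBy C g)
      = Fintype.card Γ := by
    rw [← hburn]
    exact Finset.add_sum_erase Finset.univ (fun g : Γ => Fintype.card (fixedBy C g))
      (Finset.mem_univ (1 : Γ))
  have hsum2 : (Finset.univ.erase (1 : Γ)).card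
      ≤ ∑ g ∈ Finset.univ.erase (1 : Γ), Fintype.card (fixedBy C g) := by
    calc (Finset.univ.erase (1 : Γ)).card
        = ∑ _g ∈ Finset.univ.erase (1 : Γ), 1 := by rw [Finset.sum_const, smul_eq_mul, mul_one]
      _ ≤ _ := Finset.sum_le_sum fun g _ => hge g
  have hcerase : (Finset.univ.erase (1 : Γ)).card = Fintype.card Γ - 1 := by
    rw [Finset.card_erase_of_mem (Finset.mem_univ _), Finset.card_univ]
  have hΓpos : 1 ≤ Fintype.card Γ := Fintype.card_pos_iff.mpr ⟨1⟩
  have hC2 : 2 ≤ Fintype.card C := by rwa [← Nat.card_eq_fintype_card]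
  omega

section Moebius

private lemma moebius_trichotomy (m : ℕ) :
    ArithmeticFunction.moebius m = 0 ∨ ArithmeticFunction.moebius m = 1
      ∨ ArithmeticFunction.moebius m = -1 := by
  by_cases hs : Squarefree m
  · rw [ArithmeticFunction.moebius_apply_of_squarefree hs]
    rcases Nat.even_or_odd (ArithmeticFunction.cardFactors m) with he | ho
    · right; left; exact he.neg_one_pow
    · right; right; exact ho.neg_one_pow
  · left; exact ArithmeticFunction.moebius_eq_zero_of_not_squarefree hs

private lemma moebius_card_eq {g : ℕ} (hg1 : g ≠ 1) :
    (g.divisors.filter fun m => ArithmeticFunction.moebius m = 1).card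
      = (g.divisors.filter fun m => ArithmeticFunction.moebius m = -1).card := by
  classical
  have h0 : ∑ m ∈ g.divisors, ArithmeticFunction.moebius m = 0 := by
    have h1 : (ArithmeticFunction.moebius * ↑ArithmeticFunction.zeta) g
        = (1 : ArithmeticFunction ℤ) g := by
      rw [ArithmeticFunction.moebius_mul_coe_zeta]
    rw [ArithmeticFunction.coe_mul_zeta_apply, ArithmeticFunction.one_apply_ne hg1] at h1
    exact h1
  rw [← Finset.sum_filter_add_sum_filter_not g.divisors
    (fun m => ArithmeticFunction.moebius m = 1)] at h0
  rw [← Finset.sum_filter_add_sum_filter_not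
    (g.divisors.filter fun m => ¬ ArithmeticFunction.moebius m = 1)
    (fun m => ArithmeticFunction.moebius m = -1)] at h0
  have e1 : ∑ m ∈ g.divisors.filter (fun m => ArithmeticFunction.moebius m = 1),
      ArithmeticFunction.moebius m
      = ((g.divisors.filter fun m => ArithmeticFunction.moebius m = 1).card : ℤ) := by
    rw [Finset.sum_congr rfl fun m hm => (Finset.mem_filter.mp hm).2, Finset.sum_const]
    simp
  have e2 : ∑ m ∈ (g.divisors.filter fun m => ¬ ArithmeticFunction.moebius m = 1).filter
      (fun m => ArithmeticFunction.moebius m = -1), ArithmeticFunction.moebius m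
      = -((g.divisors.filter fun m => ArithmeticFunction.moebius m = -1).card : ℤ) := by
    have hset : (g.divisors.filter fun m => ¬ ArithmeticFunction.moebius m = 1).filter
        (fun m => ArithmeticFunction.moebius m = -1)
        = g.divisors.filter fun m => ArithmeticFunction.moebius m = -1 := by
      rw [Finset.filter_filter]
      refine Finset.filter_congr fun m _ => ?_
      constructor
      · rintro ⟨_, h⟩; exact h
      · intro h; exact ⟨by rw [h]; decide, h⟩
    rw [hset, Finset.sum_congr rfl fun m hm => (Finset.mem_filter.mp hm).2, Finset.sum_const]
    simp
  have e3 : ∑ m ∈ (g.divisors.filter fun m => ¬ ArithmeticFunction.moebius m = 1).filter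
      (fun m => ¬ ArithmeticFunction.moebius m = -1), ArithmeticFunction.moebius m = 0 := by
    refine Finset.sum_eq_zero fun m hm => ?_
    obtain ⟨hm1, hm2⟩ := Finset.mem_filter.mp hm
    obtain ⟨_, hm1'⟩ := Finset.mem_filter.mp hm1
    rcases moebius_trichotomy m with h | h | h
    · exact h
    · exact absurd h hm1'
    · exact absurd h hm2
  rw [e1, e2, e3, add_zero] at h0
  omega

end Moebius

section Pieces

private noncomputable def mdiv (n : ℕ) (ε : ℤ) : Finset ℕ :=
  n.divisors.filter fun m => ArithmeticFunction.moebius m = ε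

private lemma mdiv_pos {n : ℕ} {ε : ℤ} {m : ℕ} (h : m ∈ mdiv n ε) : 0 < m := by
  have := (Finset.mem_filter.mp h).1
  exact Nat.pos_of_mem_divisors this

private abbrev PieceT (n : ℕ) (ε : ℤ) : Type :=
  Σ m : {m : ℕ // m ∈ mdiv n ε}, Fin (n / m.val) × ZMod m.val

private instance pieceFinite (n : ℕ) (ε : ℤ) : Finite (PieceT n ε) := by
  unfold PieceT
  haveI : ∀ m : {m : ℕ // m ∈ mdiv n ε}, Finite (Fin (n / m.val) × ZMod m.val) := by
    intro m
    haveI : NeZero m.val := ⟨(mdiv_pos m.2).ne'⟩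
    infer_instance
  infer_instance

private def pieceRot (n : ℕ) (ε : ℤ) : Equiv.Perm (PieceT n ε) :=
  Equiv.sigmaCongrRight fun _m => Equiv.prodCongr (Equiv.refl _) (Equiv.addRight 1)

private lemma pieceRot_apply (n : ℕ) (ε : ℤ) (m : {m : ℕ // m ∈ mdiv n ε})
    (i : Fin (n / m.val)) (z : ZMod m.val) :
    pieceRot n ε ⟨m, (i, z)⟩ = ⟨m, (i, z + 1)⟩ := rfl

private lemma pieceRot_pow_apply (n : ℕ) (ε : ℤ) (k : ℕ) (m : {m : ℕ // m ∈ mdiv n ε})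
    (i : Fin (n / m.val)) (z : ZMod m.val) :
    ((pieceRot n ε) ^ k) ⟨m, (i, z)⟩ = ⟨m, (i, z + (k : ZMod m.val))⟩ := by
  induction k with
  | zero => simp
  | succ k IH =>
    rw [pow_succ', Equiv.Perm.mul_apply, IH, pieceRot_apply, Nat.cast_add, Nat.cast_one]
    congr 2
    ring

private lemma pieceRot_fix_iff (n : ℕ) (ε : ℤ) (k : ℕ) (x : PieceT n ε) :
    ((pieceRot n ε) ^ k) x = x ↔ x.1.val ∣ k := by
  obtain ⟨m, i, z⟩ := x
  haveI : NeZero m.val := ⟨(mdiv_pos m.2).ne'⟩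
  rw [pieceRot_pow_apply, Sigma.mk.inj_iff]
  simp only [heq_iff_eq, Prod.mk.injEq, true_and]
  rw [add_eq_left, ZMod.natCast_eq_zero_iff]

/-- Subtype of a sigma type with a property, as a sigma of subtypes. -/
private def sigmaSubtypeEquiv {ι : Type*} {F : ι → Type*} (p : (Σ i, F i) → Prop) :
    {x : Σ i, F i // p x} ≃ Σ i, {y : F i // p ⟨i, y⟩} where
  toFun x := ⟨x.1.1, ⟨x.1.2, by obtain ⟨⟨a, b⟩, h⟩ := x; exact h⟩⟩
  invFun y := ⟨⟨y.1, y.2.1⟩, y.2.2⟩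
  left_inv x := by obtain ⟨⟨a, b⟩, h⟩ := x; rfl
  right_inv y := by obtain ⟨i, y2, h⟩ := y; rfl

private lemma natCard_sigma {ι : Type*} [Fintype ι] (F : ι → Type*) [∀ i, Finite (F i)] :
    Nat.card (Σ i, F i) = ∑ i, Nat.card (F i) := by
  letI : ∀ i, Fintype (F i) := fun i => Fintype.ofFinite _
  simp [Nat.card_eq_fintype_card, Fintype.card_sigma]

private lemma card_fix_pieceRot (n : ℕ) (hn : n ≠ 0) (ε : ℤ) (k : ℕ) :
    Nat.card {x : PieceT n ε // ((pieceRot n ε) ^ k) x = x}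
      = n * (((n.gcd k).divisors.filter fun m => ArithmeticFunction.moebius m = ε).card) := by
  classical
  rw [Nat.card_congr (sigmaSubtypeEquiv _)]
  have hc : ∀ (m : {m : ℕ // m ∈ mdiv n ε}) (y : Fin (n / m.val) × ZMod m.val),
      (((pieceRot n ε) ^ k) ⟨m, y⟩ = ⟨m, y⟩) ↔ (m.val ∣ k) := fun m y =>
    pieceRot_fix_iff n ε k ⟨m, y⟩
  haveI : ∀ m : {m : ℕ // m ∈ mdiv n ε}, Finite (Fin (n / m.val) × ZMod m.val) := by
    intro m; haveI : NeZero m.val := ⟨(mdiv_pos m.2).ne'⟩; infer_instance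
  rw [natCard_sigma]
  have hterm : ∀ m : {m : ℕ // m ∈ mdiv n ε},
      Nat.card {y : Fin (n / m.val) × ZMod m.val // ((pieceRot n ε) ^ k) ⟨m, y⟩ = ⟨m, y⟩}
        = if m.val ∣ k then n else 0 := by
    intro m
    rw [Nat.card_congr (Equiv.subtypeEquivRight (hc m))]
    haveI : NeZero m.val := ⟨(mdiv_pos m.2).ne'⟩
    by_cases hmk : m.val ∣ k
    · rw [if_pos hmk, Nat.card_congr (Equiv.subtypeUnivEquiv fun _ => hmk)]
      rw [Nat.card_prod, Nat.card_eq_fintype_card, Fintype.card_fin, Nat.card_zmod,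
        Nat.div_mul_cancel (Nat.mem_divisors.mp (Finset.mem_filter.mp m.2).1).1]
    · rw [if_neg hmk]
      haveI : IsEmpty {_y : Fin (n / m.val) × ZMod m.val // m.val ∣ k} := ⟨fun y => hmk y.2⟩
      exact Nat.card_of_isEmpty
  rw [Finset.sum_congr rfl fun m _ => hterm m]
  rw [Finset.sum_coe_sort (mdiv n ε) (fun m => if m ∣ k then n else 0)]
  rw [← Finset.sum_filter]
  rw [Finset.sum_const, smul_eq_mul, mul_comm]
  congr 1
  congr 1
  ext m
  simp only [mdiv, Finset.mem_filter, Nat.mem_divisors]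
  constructor
  · rintro ⟨⟨⟨hmn, _⟩, hμ⟩, hmk⟩
    exact ⟨⟨Nat.dvd_gcd hmn hmk, fun h => hn (Nat.eq_zero_of_gcd_eq_zero_left h)⟩, hμ⟩
  · rintro ⟨⟨hmg, _⟩, hμ⟩
    exact ⟨⟨⟨hmg.trans (Nat.gcd_dvd_left n k), hn⟩, hμ⟩, hmg.trans (Nat.gcd_dvd_right n k)⟩

end Pieces

private lemma prodCongr_pow_apply {X Y : Type*} (f : Equiv.Perm X) (g : Equiv.Perm Y)
    (k : ℕ) (x : X) (y : Y) :
    ((Equiv.prodCongr f g) ^ k) (x, y) = ((f ^ k) x, (g ^ k) y) := by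
  induction k with
  | zero => simp
  | succ k IH =>
    rw [pow_succ', Equiv.Perm.mul_apply, IH, pow_succ' f k, pow_succ' g k,
      Equiv.Perm.mul_apply, Equiv.Perm.mul_apply]
    rfl

private lemma card_fix_prod {X Y : Type*} (f : Equiv.Perm X) (g : Equiv.Perm Y) (k : ℕ) :
    Nat.card {p : X × Y // ((Equiv.prodCongr f g) ^ k) p = p}
      = Nat.card {x : X // (f ^ k) x = x} * Nat.card {y : Y // (g ^ k) y = y} := by
  rw [← Nat.card_prod]
  refine Nat.card_congr ?_
  refine (Equiv.subtypeEquivRight fun p => ?_).trans (Equiv.subtypeProdEquivProd)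
  obtain ⟨x, y⟩ := p
  rw [prodCongr_pow_apply, Prod.mk.injEq]

theorem transitive_not_finitely_cancelling {C : Type} [Finite C]
    (hC : 1 < Nat.card C) (Γ : Subgroup (Equiv.Perm C))
    (htrans : ∀ c c' : C, ∃ γ ∈ Γ, γ c = c') :
    ¬ FinitelyCancelling C Γ := by
  classical
  intro FC
  haveI : Nonempty C := by
    rcases Nat.card_pos_iff.mp (by omega : 0 < Nat.card C) with ⟨h1, _⟩
    exact h1
  obtain ⟨γ, hγΓ, hγ⟩ := exists_fpf hC Γ htrans
  set n := orderOf γ with hn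
  have hn0 : n ≠ 0 := (orderOf_pos γ).ne'
  have hn1 : n ≠ 1 := by
    intro h
    obtain ⟨c⟩ := ‹Nonempty C›
    have : γ = 1 := orderOf_eq_one_iff.mp h
    exact hγ c (by rw [this]; rfl)
  set α := pieceRot n 1 with hα
  set β := pieceRot n (-1) with hβ
  -- the two product permutations have equal fixed point counts for all powers
  have hmarks : ∀ k : ℕ,
      Nat.card {x : PieceT n 1 × C // ((Equiv.prodCongr α γ) ^ k) x = x}
        = Nat.card {x : PieceT n (-1) × C // ((Equiv.prodCongr β γ) ^ k) x = x} := by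
    intro k
    rw [card_fix_prod, card_fix_prod]
    by_cases hg : n.gcd k = 1
    · have hempty : Nat.card {c : C // (γ ^ k) c = c} = 0 := by
        have hno : ∀ c : C, (γ ^ k) c ≠ c := by
          intro c hc
          have hcop : Nat.Coprime k n := Nat.coprime_comm.mp hg
          obtain ⟨j, -, hj⟩ := Nat.exists_mul_mod_eq_one_of_coprime hcop
            (by omega : 1 < n)
          have h2 : ((γ ^ k) ^ j) c = c :=
            Equiv.Perm.pow_apply_eq_self_of_apply_eq_self hc j
          rw [← pow_mul] at h2
          have h3 : γ ^ (k * j) = γ := by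
            conv_rhs => rw [← pow_one γ]
            rw [← hj, hn, pow_mod_orderOf]
          rw [h3] at h2
          exact hγ c h2
        haveI : IsEmpty {c : C // (γ ^ k) c = c} := ⟨fun c => hno c.1 c.2⟩
        exact Nat.card_of_isEmpty
      rw [hempty, mul_zero, mul_zero]
    · rw [hα, hβ, card_fix_pieceRot n hn0 1 k, card_fix_pieceRot n hn0 (-1) k,
        moebius_card_eq hg]
  -- get the conjugating bijection
  obtain ⟨e, he⟩ := exists_conj_of_fixcount (Equiv.prodCongr α γ) (Equiv.prodCongr β γ) hmarks
  have htr : transform e α β γ = e := by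
    apply Equiv.ext
    intro x
    show (Equiv.prodCongr β γ) (e ((Equiv.prodCongr α γ).symm x)) = e x
    rw [← he ((Equiv.prodCongr α γ).symm x), Equiv.apply_symm_apply]
  obtain ⟨h, hh⟩ := FC (PieceT n 1) (PieceT n (-1)) (pieceFinite n 1) (pieceFinite n (-1)) e
  have hq := hh α β γ hγΓ htr
  -- α has a fixed point
  have h1mem : (1 : ℕ) ∈ mdiv n 1 :=
    Finset.mem_filter.mpr ⟨Nat.one_mem_divisors.mpr hn0, ArithmeticFunction.moebius_apply_one⟩
  have hnpos : 0 < n / 1 := by rw [Nat.div_one]; omega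
  set a₀ : PieceT n 1 := ⟨⟨1, h1mem⟩, (⟨0, hnpos⟩, 0)⟩ with ha₀
  have hαa₀ : α a₀ = a₀ := by
    rw [ha₀, hα, pieceRot_apply]
    congr 2
  -- β fixes h a₀
  have hba : β (h a₀) = h a₀ := by
    have := congrArg (fun e : PieceT n 1 ≃ PieceT n (-1) => e a₀) hq
    simp only [transformQ, Equiv.trans_apply] at this
    have hsymm : α.symm a₀ = a₀ := by
      conv_lhs => rw [← hαa₀]
      exact α.symm_apply_apply a₀
    rwa [hsymm] at this
  -- but β is fixed point free
  have : ((pieceRot n (-1)) ^ 1) (h a₀) = h a₀ := by rwa [pow_one, ← hβ]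
  rw [pieceRot_fix_iff] at this
  have hm1 : ((h a₀).1.val : ℕ) = 1 := Nat.dvd_one.mp this
  have := (Finset.mem_filter.mp (h a₀).1.2).2
  rw [hm1] at this
  rw [ArithmeticFunction.moebius_apply_one] at this
  exact absurd this (by decide)
end

section
/- Let C = {a, b, c, d, e} be a five-element set and let γ ∈ S(C) be the permutation that is the product of the 3-cycle (a, b, c) and the disjoint 2-cycle (d, e). Then the cyclic subgroup ⟨γ⟩ of S(C) generated by γ is not finitely cancelling: there exist finite sets A and B and a bijection f : A × C → B × C admitting no ⟨γ⟩-equivariant quotient. -/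
set_option maxRecDepth 100000


def c6 : Equiv.Perm (Fin 5) := ⟨![1,2,0,4,3], ![2,0,1,4,3], by decide, by decide⟩

def ap : Equiv.Perm (Fin 18) := ⟨![1,0,3,2,5,4,7,8,6,10,11,9,13,14,15,16,17,12], ![1,0,3,2,5,4,8,6,7,11,9,10,17,12,13,14,15,16], by decide, by decide⟩

def bp : Equiv.Perm (Fin 18) := ⟨![0,1,2,3,4,5,7,8,9,10,11,6,13,14,15,16,17,12], ![0,1,2,3,4,5,11,6,7,8,9,10,17,12,13,14,15,16], by decide, by decide⟩

def enc : Fin 18 × Fin 5 ≃ Fin 90 :=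
  ⟨fun p => ⟨p.1.val * 5 + p.2.val, by omega⟩,
   fun k => (⟨k.val / 5, by omega⟩, ⟨k.val % 5, by omega⟩),
   by decide, by decide⟩

def gp : Equiv.Perm (Fin 90) := ⟨![30,51,42,3,8,45,36,57,9,4,31,52,40,13,18,46,37,55,19,14,32,50,41,23,28,47,35,56,29,24,0,5,10,33,49,11,1,6,53,39,7,12,2,43,59,15,20,25,34,48,26,16,21,54,38,22,27,17,44,58,60,61,62,63,64,65,66,67,68,69,70,71,72,73,74,75,76,77,78,79,80,81,82,83,84,85,86,87,88,89], ![30,36,42,3,9,31,37,40,4,8,32,35,41,13,19,45,51,57,14,18,46,52,55,23,29,47,50,56,24,28,0,10,20,33,48,26,6,16,54,39,12,22,2,43,58,5,15,25,49,34,21,1,11,38,53,17,27,7,59,44,60,61,62,63,64,65,66,67,68,69,70,71,72,73,74,75,76,77,78,79,80,81,82,83,84,85,86,87,88,89], by decide, by decide⟩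

def fex : Fin 18 × Fin 5 ≃ Fin 18 × Fin 5 := (enc.trans gp).trans enc.symm

theorem fex_key : transform fex ap bp c6 = fex := by
  apply Equiv.ext
  decide

theorem ap_nofix : ∀ x, ap.symm x ≠ x := by decide

theorem bp_fix : bp.symm 0 = 0 := by decide

theorem main_aux (γ : Equiv.Perm (Fin 5))
    (h0 : γ 0 = 1) (h1 : γ 1 = 2) (h2 : γ 2 = 0) (h3 : γ 3 = 4) (h4 : γ 4 = 3) :
    ∀ h : Fin 18 ≃ Fin 18, ¬ IsEquivQuotient (Subgroup.zpowers γ) fex h := by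
  have hγ : γ = c6 := by
    apply Equiv.ext
    intro x
    fin_cases x
    · exact h0.trans (by decide)
    · exact h1.trans (by decide)
    · exact h2.trans (by decide)
    · exact h3.trans (by decide)
    · exact h4.trans (by decide)
  subst hγ
  intro h hq
  have key := hq ap bp c6 (Subgroup.mem_zpowers c6) fex_key
  have e1 : bp (h (ap.symm (h.symm 0))) = 0 := by
    have := congrArg (fun (e : Fin 18 ≃ Fin 18) => e (h.symm 0)) key
    simpa [transformQ] using this
  have e2 : h (ap.symm (h.symm 0)) = h (h.symm 0) := by
    rw [Equiv.apply_symm_apply]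
    have := congrArg (⇑bp.symm) e1
    rw [Equiv.symm_apply_apply, bp_fix] at this
    exact this
  exact ap_nofix _ (h.injective e2)

theorem three_two_cycle_not_finitely_cancelling (γ : Equiv.Perm (Fin 5))
    (h0 : γ 0 = 1) (h1 : γ 1 = 2) (h2 : γ 2 = 0) (h3 : γ 3 = 4) (h4 : γ 4 = 3) :
    (∃ (A B : Type), Finite A ∧ Finite B ∧
      ∃ f : A × Fin 5 ≃ B × Fin 5, ∀ h : A ≃ B,
        ¬ IsEquivQuotient (Subgroup.zpowers γ) f h) ∧
    ¬ FinitelyCancelling (Fin 5) (Subgroup.zpowers γ) := by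
  constructor
  · exact ⟨Fin 18, Fin 18, inferInstance, inferInstance, fex, main_aux γ h0 h1 h2 h3 h4⟩
  · intro FC
    obtain ⟨h, hq⟩ := FC (Fin 18) (Fin 18) inferInstance inferInstance fex
    exact main_aux γ h0 h1 h2 h3 h4 h hq
end

section
/- Let C = {a, b, c, d, e, f} be a six-element set and let Γ be the four-element subgroup of S(C) given by {id, (a,b)(c,d), (a,b)(e,f), (c,d)(e,f)}. Then Γ is not finitely cancelling, even though Γ has no fixed-point-free element. -/
namespace KleinAux

/-- The element (01)(23) of `S(Fin 6)`. -/
def g1 : Equiv.Perm (Fin 6) := Equiv.swap 0 1 * Equiv.swap 2 3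
/-- The element (01)(45) of `S(Fin 6)`. -/
def g2 : Equiv.Perm (Fin 6) := Equiv.swap 0 1 * Equiv.swap 4 5
/-- The element (23)(45) of `S(Fin 6)`. -/
def a1 : Equiv.Perm (Fin 6) := Equiv.swap 2 3 * Equiv.swap 4 5
/-- The element (24)(35) of `S(Fin 6)`. -/
def a2 : Equiv.Perm (Fin 6) := Equiv.swap 2 4 * Equiv.swap 3 5

def Ftab : Fin 6 → Fin 6 → Fin 6 × Fin 6 :=
  ![![(0,0), (1,1), (2,2), (3,3), (4,4), (5,5)],
    ![(0,1), (1,0), (2,3), (3,2), (4,5), (5,4)],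
    ![(0,2), (0,4), (2,0), (2,4), (4,0), (4,2)],
    ![(1,4), (1,3), (3,4), (3,1), (4,1), (4,3)],
    ![(1,5), (1,2), (2,1), (2,5), (5,2), (5,1)],
    ![(0,3), (0,5), (3,5), (3,0), (5,3), (5,0)]]

def Gtab : Fin 6 → Fin 6 → Fin 6 × Fin 6 :=
  ![![(0,0), (1,0), (2,0), (5,0), (2,1), (5,1)],
    ![(1,1), (0,1), (4,1), (3,1), (3,0), (4,0)],
    ![(2,2), (4,2), (0,2), (1,2), (2,3), (4,3)],
    ![(5,3), (3,3), (1,3), (0,3), (3,2), (5,2)],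
    ![(2,4), (3,4), (2,5), (3,5), (0,4), (1,4)],
    ![(5,5), (4,5), (4,4), (5,4), (1,5), (0,5)]]

/-- The equivariant bijection that witnesses the failure of cancellation. -/
def myF : Fin 6 × Fin 6 ≃ Fin 6 × Fin 6 where
  toFun p := Ftab p.1 p.2
  invFun p := Gtab p.1 p.2
  left_inv := by decide
  right_inv := by decide

theorem equi1 : transform myF a1 g1 g1 = myF := by decide

theorem equi2 : transform myF a2 g2 g2 = myF := by decide

end KleinAux

theorem klein_like_group_not_finitely_cancelling (γ₁ γ₂ : Equiv.Perm (Fin 6))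
    (hγ₁ : γ₁ 0 = 1 ∧ γ₁ 1 = 0 ∧ γ₁ 2 = 3 ∧ γ₁ 3 = 2 ∧ γ₁ 4 = 4 ∧ γ₁ 5 = 5)
    (hγ₂ : γ₂ 0 = 1 ∧ γ₂ 1 = 0 ∧ γ₂ 2 = 2 ∧ γ₂ 3 = 3 ∧ γ₂ 4 = 5 ∧ γ₂ 5 = 4)
    (Γ : Subgroup (Equiv.Perm (Fin 6)))
    (hΓ : (Γ : Set (Equiv.Perm (Fin 6))) = {1, γ₁, γ₂, γ₁ * γ₂}) :
    (∀ γ ∈ Γ, ∃ c : Fin 6, γ c = c) ∧ ¬ FinitelyCancelling (Fin 6) Γ := by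
  open KleinAux in
  obtain ⟨h10, h11, h12, h13, h14, h15⟩ := hγ₁
  obtain ⟨h20, h21, h22, h23, h24, h25⟩ := hγ₂
  have hg1 : γ₁ = g1 := by
    apply Equiv.ext
    intro i
    fin_cases i <;>
      simp only [show (⟨0, by norm_num⟩ : Fin 6) = 0 from rfl,
        show (⟨1, by norm_num⟩ : Fin 6) = 1 from rfl,
        show (⟨2, by norm_num⟩ : Fin 6) = 2 from rfl,
        show (⟨3, by norm_num⟩ : Fin 6) = 3 from rfl,
        show (⟨4, by norm_num⟩ : Fin 6) = 4 from rfl,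
        show (⟨5, by norm_num⟩ : Fin 6) = 5 from rfl,
        h10, h11, h12, h13, h14, h15] <;> decide
  have hg2 : γ₂ = g2 := by
    apply Equiv.ext
    intro i
    fin_cases i <;>
      simp only [show (⟨0, by norm_num⟩ : Fin 6) = 0 from rfl,
        show (⟨1, by norm_num⟩ : Fin 6) = 1 from rfl,
        show (⟨2, by norm_num⟩ : Fin 6) = 2 from rfl,
        show (⟨3, by norm_num⟩ : Fin 6) = 3 from rfl,
        show (⟨4, by norm_num⟩ : Fin 6) = 4 from rfl,
        show (⟨5, by norm_num⟩ : Fin 6) = 5 from rfl,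
        h20, h21, h22, h23, h24, h25] <;> decide
  constructor
  · intro γ hγ
    have : γ ∈ (Γ : Set (Equiv.Perm (Fin 6))) := hγ
    rw [hΓ] at this
    simp only [Set.mem_insert_iff, Set.mem_singleton_iff] at this
    rcases this with rfl | rfl | rfl | rfl
    · exact ⟨0, rfl⟩
    · exact ⟨4, h14⟩
    · exact ⟨2, h22⟩
    · exact ⟨0, by rw [Equiv.Perm.mul_apply, h20, h11]⟩
  · intro hFC
    have mem1 : γ₁ ∈ Γ := by
      rw [← SetLike.mem_coe, hΓ]; simp
    have mem2 : γ₂ ∈ Γ := by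
      rw [← SetLike.mem_coe, hΓ]; simp
    obtain ⟨h, hh⟩ := hFC (Fin 6) (Fin 6) (by infer_instance) (by infer_instance) myF
    have e1 := hh a1 g1 γ₁ mem1 (by rw [hg1]; exact equi1)
    have e2 := hh a2 g2 γ₂ mem2 (by rw [hg2]; exact equi2)
    have t1 : g1 (h 0) = h 0 := by
      have := congrArg (fun (e : Fin 6 ≃ Fin 6) => e 0) e1
      simpa [transformQ, Equiv.trans_apply, show a1.symm 0 = 0 from rfl] using this
    have t2 : g2 (h 0) = h 0 := by
      have := congrArg (fun (e : Fin 6 ≃ Fin 6) => e 0) e2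
      simpa [transformQ, Equiv.trans_apply, show a2.symm 0 = 0 from rfl] using this
    have key : ∀ x : Fin 6, ¬ (g1 x = x ∧ g2 x = x) := by decide
    exact key (h 0) ⟨t1, t2⟩
end

section
/- Let n ≥ 1 and k ≥ 1, let A and B be sets of cardinality n and C a set of cardinality k. If every bijection f : A × C → B × C admits an S(C)-equivariant quotient, then gcd(k, n!) = 1; equivalently, k has no prime factor ≤ n. -/
theorem equivariant_division_necessary_condition {A B C : Type} (n k : ℕ)
    (hn : 1 ≤ n) (hk : 1 ≤ k)
    (hA : Nat.card A = n) (hB : Nat.card B = n) (hC : Nat.card C = k)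
    (hdiv : ∀ f : A × C ≃ B × C, ∃ h : A ≃ B,
      IsEquivQuotient (⊤ : Subgroup (Equiv.Perm C)) f h) :
    Nat.gcd k (Nat.factorial n) = 1 ∧ ∀ p : ℕ, p.Prime → p ∣ k → n < p := by
  haveI : Finite A := Nat.finite_of_card_ne_zero (by omega)
  haveI : Finite B := Nat.finite_of_card_ne_zero (by omega)
  haveI : Finite C := Nat.finite_of_card_ne_zero (by omega)
  have key : ∀ p : ℕ, p.Prime → p ∣ k → n < p := by
    intro p hp hpk
    by_contra hle
    push_neg at hle
    haveI : Fact p.Prime := ⟨hp⟩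
    -- an embedding ZMod p ↪ A
    haveI := Fintype.ofFinite A
    haveI := Fintype.ofFinite B
    have hcard : Fintype.card (ZMod p) ≤ Fintype.card A := by
      rw [ZMod.card, ← Nat.card_eq_fintype_card, hA]; exact hle
    obtain ⟨ι⟩ := Function.Embedding.nonempty_of_card_le hcard
    -- equivalences
    have eC : C ≃ ZMod p × Fin (k / p) := by
      refine (Finite.equivFinOfCardEq hC).trans ?_
      refine (Finite.equivFinOfCardEq ?_).symm
      rw [Nat.card_prod, Nat.card_zmod, Nat.card_eq_fintype_card, Fintype.card_fin,
        Nat.mul_div_cancel' hpk]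
    have eAB : A ≃ B := (Finite.equivFinOfCardEq hA).trans (Finite.equivFinOfCardEq hB).symm
    -- the family of permutations of A and the shear
    set g : ZMod p → Equiv.Perm A :=
      fun j => Equiv.Perm.viaEmbedding (Equiv.subRight j) ι with hgdef
    have hg_apply : ∀ (j : ZMod p) (x : ZMod p), g j (ι x) = ι (x - j) := by
      intro j x
      simpa using Equiv.Perm.viaEmbedding_apply (Equiv.subRight j) ι x
    have hg_not : ∀ (j : ZMod p) (b : A), b ∉ Set.range ι → g j b = b := by
      intro j b hb
      exact Equiv.Perm.viaEmbedding_apply_of_notMem (Equiv.subRight j) ι b hb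
    set α : Equiv.Perm A := g (-1) with hαdef
    have hgα : ∀ (j : ZMod p) (b : A), g j (α b) = g (j - 1) b := by
      intro j b
      by_cases hb : b ∈ Set.range ι
      · obtain ⟨x, rfl⟩ := hb
        rw [hαdef, hg_apply (-1) x, hg_apply j (x - -1), hg_apply (j - 1) x]
        ring_nf
      · rw [hαdef, hg_not (-1) b hb, hg_not j b hb, hg_not (j - 1) b hb]
    -- the shear equivalence
    set Φ : A × C ≃ A × C :=
      { toFun := fun x => (g (eC x.2).1 x.1, x.2)
        invFun := fun x => ((g (eC x.2).1)⁻¹ x.1, x.2)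
        left_inv := fun x => by simp
        right_inv := fun x => by simp } with hΦdef
    set f : A × C ≃ B × C := Φ.trans (eAB.prodCongr (Equiv.refl C)) with hfdef
    have hf_apply : ∀ (a : A) (c : C), f (a, c) = (eAB (g (eC c).1 a), c) := fun a c => rfl
    -- the permutation γ of C
    set γ : Equiv.Perm C :=
      { toFun := fun c => eC.symm ((eC c).1 + 1, (eC c).2)
        invFun := fun c => eC.symm ((eC c).1 - 1, (eC c).2)
        left_inv := fun c => by simp
        right_inv := fun c => by simp } with hγdef
    have hγinv : ∀ c : C, eC (γ⁻¹ c) = ((eC c).1 - 1, (eC c).2) := by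
      intro c
      have h0 : γ⁻¹ c = eC.symm ((eC c).1 - 1, (eC c).2) := rfl
      rw [h0, Equiv.apply_symm_apply]
    have hγfwd : ∀ c : C, γ c = eC.symm ((eC c).1 + 1, (eC c).2) := fun c => rfl
    -- the invariance
    have hinv : transform f α 1 γ = f := by
      apply Equiv.ext
      rintro ⟨a, c⟩
      show (Equiv.prodCongr 1 γ) (f ((Equiv.prodCongr α γ).symm (a, c))) = f (a, c)
      have h1 : (Equiv.prodCongr α γ).symm (a, c) = (α⁻¹ a, γ⁻¹ c) := rfl
      rw [h1, hf_apply, hf_apply]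
      show (eAB (g (eC (γ⁻¹ c)).1 (α⁻¹ a)), γ (γ⁻¹ c)) = (eAB (g (eC c).1 a), c)
      rw [hγinv]
      have h2 : g ((eC c).1 - 1) (α⁻¹ a) = g (eC c).1 a := by
        have h3 := hgα (eC c).1 (α⁻¹ a)
        rw [(show α (α⁻¹ a) = a from Equiv.apply_symm_apply α a)] at h3
        exact h3.symm
      rw [h2, (show γ (γ⁻¹ c) = c from Equiv.apply_symm_apply γ c)]
    -- apply the hypothesis
    obtain ⟨h, hquot⟩ := hdiv f
    have heq := hquot α 1 γ (Subgroup.mem_top γ) hinv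
    -- derive a contradiction
    have : h (α⁻¹ (α (ι 0))) = h (α (ι 0)) := by
      conv_rhs => rw [← heq]
      rfl
    rw [(show α⁻¹ (α (ι 0)) = ι 0 from Equiv.symm_apply_apply α (ι 0))] at this
    have hι : ι 0 = α (ι 0) := h.injective this
    rw [hαdef, hg_apply] at hι
    have : (0 : ZMod p) = 0 - -1 := ι.injective hι
    simp at this
  refine ⟨?_, key⟩
  by_contra hgcd
  obtain ⟨p, hp, hpd⟩ := Nat.exists_prime_and_dvd hgcd
  have hpk : p ∣ k := hpd.trans (Nat.gcd_dvd_left _ _)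
  have hpn : p ∣ Nat.factorial n := hpd.trans (Nat.gcd_dvd_right _ _)
  have := key p hp hpk
  have := (Nat.Prime.dvd_factorial hp).mp hpn
  omega
end

section
/- Let n ∈ {1, 2, 3} and k ≥ 1 with gcd(k, n!) = 1, let A and B be sets of cardinality n and C a set of cardinality k. Then every bijection f : A × C → B × C admits an S(C)-equivariant quotient bijection h : A → B. -/
namespace EquivDivAux

open Equiv

variable {A B C : Type}

theorem transform_one (f : A × C ≃ B × C) : transform f 1 1 1 = f :=
  Equiv.ext fun _ => rfl

theorem transform_comp (f : A × C ≃ B × C) (α α' β β' γ γ') :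
    transform (transform f α' β' γ') α β γ = transform f (α*α') (β*β') (γ*γ') :=
  Equiv.ext fun _ => rfl

theorem transform_symm (f : A × C ≃ B × C) (α β γ) :
    (transform f α β γ).symm = transform f.symm β α γ :=
  Equiv.ext fun _ => rfl

theorem stab_apply {f : A × C ≃ B × C} {α β γ} (h : transform f α β γ = f) :
    ∀ x : A × C, f (α x.1, γ x.2) = (β (f x).1, γ (f x).2) := by
  intro x
  have h1 : transform f α β γ ((Equiv.prodCongr α γ) x) = f ((Equiv.prodCongr α γ) x) := by
    rw [h]
  simp only [transform, Equiv.trans_apply, Equiv.symm_apply_apply] at h1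
  exact h1.symm

theorem stab_apply_pow {f : A × C ≃ B × C} {α β γ} (h : transform f α β γ = f) :
    ∀ (m : ℕ) (x : A × C), f ((α^m) x.1, (γ^m) x.2) = ((β^m) (f x).1, (γ^m) (f x).2) := by
  intro m
  induction m with
  | zero => intro x; simp
  | succ m ih =>
    intro x
    have h1 := stab_apply h x
    have h2 := ih (α x.1, γ x.2)
    simp only [pow_succ, Equiv.Perm.mul_apply]
    rw [h2, h1]

theorem fix_count [Finite A] [Finite B] [Finite C]
    {f : A × C ≃ B × C} {α β γ} (h : transform f α β γ = f) (m : ℕ) :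
    Nat.card {a : A // (α^m) a = a} * Nat.card {c : C // (γ^m) c = c}
      = Nat.card {b : B // (β^m) b = b} * Nat.card {c : C // (γ^m) c = c} := by
  rw [← Nat.card_prod, ← Nat.card_prod]
  apply Nat.card_congr
  refine (Equiv.subtypeProdEquivProd (p := fun a : A => (α^m) a = a)
      (q := fun c : C => (γ^m) c = c)).symm.trans (Equiv.trans ?_
      (Equiv.subtypeProdEquivProd (p := fun b : B => (β^m) b = b)
      (q := fun c : C => (γ^m) c = c)))
  refine Equiv.subtypeEquiv f fun x => ?_
  constructor
  · rintro ⟨h1, h2⟩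
    have h3 := stab_apply_pow h m x
    rw [h1, h2] at h3
    have h4 : ((β^m) (f x).1, (γ^m) (f x).2) = f x := by
      rw [← h3]
    exact ⟨congrArg Prod.fst h4, congrArg Prod.snd h4⟩
  · rintro ⟨h1, h2⟩
    have h3 := stab_apply_pow h m x
    rw [h1, h2] at h3
    have h4 : ((α^m) x.1, (γ^m) x.2) = x := f.injective h3
    exact ⟨congrArg Prod.fst h4, congrArg Prod.snd h4⟩

theorem perm_eq_one_of_card_fix {X : Type} [Finite X] {σ : Equiv.Perm X}
    (h : Nat.card {x : X // σ x = x} = Nat.card X) : σ = 1 := by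
  by_contra hne
  obtain ⟨x, hx⟩ : ∃ x, σ x ≠ x := by
    by_contra hc
    push_neg at hc
    exact hne (Equiv.ext hc)
  exact absurd h (Nat.ne_of_lt (Finite.card_subtype_lt hx))

theorem exists_fixed_pow {p : ℕ} (hp : p.Prime) [Finite C] [Nonempty C]
    (hpk : ¬ p ∣ Nat.card C) (γ : Equiv.Perm C) :
    ∃ q : ℕ, ¬ p ∣ q ∧ ∃ c : C, (γ^q) c = c := by
  classical
  have hFact : Fact p.Prime := ⟨hp⟩
  set N := orderOf γ with hN
  have hNpos : 0 < N := orderOf_pos γ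
  set q := N / p ^ N.factorization p with hq
  refine ⟨q, Nat.not_dvd_ordCompl hp hNpos.ne', ?_⟩
  have horder : orderOf (γ ^ q) = p ^ N.factorization p := by
    rw [orderOf_pow, Nat.gcd_eq_right (Nat.ordCompl_dvd N p)]
    exact Nat.div_div_self (Nat.ordProj_dvd N p) hNpos.ne'
  have hPG : IsPGroup p (Subgroup.zpowers (γ ^ q)) :=
    IsPGroup.of_card (by rw [Nat.card_zpowers, horder])
  have hmod := hPG.card_modEq_card_fixedPoints C
  have hne : (MulAction.fixedPoints (Subgroup.zpowers (γ ^ q)) C).Nonempty := by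
    by_contra hc
    rw [Set.not_nonempty_iff_eq_empty] at hc
    rw [hc] at hmod
    simp at hmod
    exact hpk ((Nat.modEq_zero_iff_dvd).1 hmod)
  obtain ⟨c, hc⟩ := hne
  refine ⟨c, ?_⟩
  have := hc ⟨γ ^ q, Subgroup.mem_zpowers _⟩
  simpa using this

theorem beta_eq_one [Finite A] [Finite B] [Finite C] [Nonempty C]
    {f : A × C ≃ B × C} {β : Equiv.Perm B} {γ : Equiv.Perm C}
    (h : transform f 1 β γ = f)
    (hAB : Nat.card A = Nat.card B)
    (hgcd : ∀ p : ℕ, p.Prime → p ∣ orderOf β → ¬ p ∣ Nat.card C) : β = 1 := by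
  by_contra hne
  have hd : orderOf β ≠ 1 := by simpa [orderOf_eq_one_iff] using hne
  set p := (orderOf β).minFac with hpdef
  have hp : p.Prime := Nat.minFac_prime hd
  have hpd : p ∣ orderOf β := Nat.minFac_dvd _
  obtain ⟨q, hpq, c, hc⟩ := exists_fixed_pow hp (hgcd p hp hpd) γ
  have hcount := fix_count h q
  haveI : Nonempty {c : C // (γ^q) c = c} := ⟨⟨c, hc⟩⟩
  have hCpos : 0 < Nat.card {c : C // (γ^q) c = c} := Nat.card_pos
  have h1 : Nat.card {a : A // ((1 : Equiv.Perm A)^q) a = a} = Nat.card A :=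
    Nat.card_congr (Equiv.subtypeUnivEquiv fun x => by simp)
  have h2 : Nat.card {b : B // (β^q) b = b} = Nat.card B := by
    have := Nat.eq_of_mul_eq_mul_right hCpos hcount
    rw [h1, hAB] at this
    exact this.symm
  have h3 : β^q = 1 := perm_eq_one_of_card_fix h2
  exact hpq (dvd_trans hpd (orderOf_dvd_of_pow_eq_one h3))

theorem alpha_eq_one [Finite A] [Finite B] [Finite C] [Nonempty C]
    {f : A × C ≃ B × C} {α : Equiv.Perm A} {γ : Equiv.Perm C}
    (h : transform f α 1 γ = f)
    (hAB : Nat.card A = Nat.card B)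
    (hgcd : ∀ p : ℕ, p.Prime → p ∣ orderOf α → ¬ p ∣ Nat.card C) : α = 1 := by
  have h' : transform f.symm 1 α γ = f.symm := by
    rw [← transform_symm, h]
  exact beta_eq_one h' hAB.symm hgcd

theorem orderOf_perm_dvd_factorial {B : Type} [Finite B] (β : Equiv.Perm B) :
    orderOf β ∣ (Nat.card B).factorial := by
  classical
  cases nonempty_fintype B
  rw [Nat.card_eq_fintype_card, ← Fintype.card_perm]
  exact orderOf_dvd_card

set_option synthInstance.maxSize 1000 in
set_option synthInstance.maxHeartbeats 1000000 in
set_option maxRecDepth 100000 in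
set_option maxHeartbeats 2000000 in
private theorem D1 : ∀ c c' t t' : Perm (Fin 3), c*(c*c)=1 → ¬c=1 → c'*(c'*c')=1 → ¬c'=1 →
    t*t=1 → ¬t=1 → t'*t'=1 → ¬t'=1 →
    ∃ h : Perm (Fin 3), c' = h*c*h⁻¹ ∧ t' = h*t*h⁻¹ := by decide

private theorem D2 : ∀ c t a : Perm (Fin 3), c*(c*c)=1 → ¬c=1 → t*t=1 → ¬t=1 →
    (a = 1 ∨ a = c ∨ a = c*c ∨ a = t ∨ a = c*t ∨ a = c*(c*t)) := by decide

private theorem D3 : ∀ c c' : Perm (Fin 3), c*(c*c)=1 → ¬c=1 → c'*(c'*c')=1 → ¬c'=1 →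
    ∃ h : Perm (Fin 3), c' = h*c*h⁻¹ := by decide

private theorem D4 : ∀ c a : Perm (Fin 3), c*(c*c)=1 → ¬c=1 →
    (a=1 ∨ a=c ∨ a=c*c ∨ (a*a=1 ∧ ¬a=1)) := by decide

private theorem D5 : ∀ t t' : Perm (Fin 3), t*t=1 → ¬t=1 → t'*t'=1 → ¬t'=1 →
    ∃ h : Perm (Fin 3), t' = h*t*h⁻¹ := by decide

set_option maxRecDepth 100000 in
private theorem D6 : ∀ t a : Perm (Fin 3), t*t=1 → ¬t=1 →
    (a=1 ∨ a=t ∨ (a*(a*a)=1 ∧ ¬a=1) ∨ ((t*a)*((t*a)*(t*a))=1 ∧ ¬t*a=1)) := by decide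

private theorem D7 : ∀ a : Perm (Fin 3), a = 1 ∨ (a*a=1 ∧ ¬a=1) ∨ (a*(a*a)=1 ∧ ¬a=1) := by
  decide

private theorem D8 : ∀ a b : Perm (Fin 2), ¬a=1 → ¬b=1 → b = 1*a*1⁻¹ := by decide

private theorem D9 : ∀ a b : Perm (Fin 1), b = 1*a*1⁻¹ := by decide

theorem key3 (S : Set (Perm (Fin 3) × Perm (Fin 3)))
    (hmul : ∀ p ∈ S, ∀ q ∈ S, p * q ∈ S)
    (hinv : ∀ p ∈ S, p⁻¹ ∈ S)
    (hg1 : ∀ p ∈ S, p.1 = 1 → p.2 = 1)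
    (hg2 : ∀ p ∈ S, p.2 = 1 → p.1 = 1) :
    ∃ h : Perm (Fin 3), ∀ p ∈ S, p.2 = h * p.1 * h⁻¹ := by
  have func : ∀ a b b', (a, b) ∈ S → (a, b') ∈ S → b = b' := by
    intro a b b' h1 h2
    have h3 : ((a,b)⁻¹ * (a,b') : Perm (Fin 3) × Perm (Fin 3)) ∈ S :=
      hmul _ (hinv _ h1) _ h2
    have h4 : ((a⁻¹ * a, b⁻¹ * b') : Perm (Fin 3) × Perm (Fin 3)) ∈ S := h3
    rw [inv_mul_cancel] at h4
    have := hg1 _ h4 rfl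
    exact inv_mul_eq_one.1 this
  have snd_ne : ∀ a b, (a, b) ∈ S → ¬a=1 → ¬b=1 := fun a b hm ha hb => ha (hg2 _ hm hb)
  have cube : ∀ a b, (a, b) ∈ S → a*(a*a)=1 → b*(b*b)=1 := by
    intro a b hm ha
    have h1 : ((a*(a*a), b*(b*b)) : Perm (Fin 3) × Perm (Fin 3)) ∈ S :=
      hmul _ hm _ (hmul _ hm _ hm)
    rw [ha] at h1
    exact hg1 _ h1 rfl
  have sq : ∀ a b, (a, b) ∈ S → a*a=1 → b*b=1 := by
    intro a b hm ha
    have h1 : ((a*a, b*b) : Perm (Fin 3) × Perm (Fin 3)) ∈ S := hmul _ hm _ hm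
    rw [ha] at h1
    exact hg1 _ h1 rfl
  by_cases h3c : ∃ p ∈ S, p.1*(p.1*p.1) = 1 ∧ ¬p.1 = 1
  · obtain ⟨⟨c, c'⟩, hcS, hc3, hc1⟩ := h3c
    have hc'3 : c'*(c'*c') = 1 := cube _ _ hcS hc3
    have hc'1 : ¬c' = 1 := snd_ne _ _ hcS hc1
    by_cases h2c : ∃ p ∈ S, p.1*p.1 = 1 ∧ ¬p.1 = 1
    · obtain ⟨⟨t, t'⟩, htS, ht2, ht1⟩ := h2c
      have ht'2 : t'*t' = 1 := sq _ _ htS ht2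
      have ht'1 : ¬t' = 1 := snd_ne _ _ htS ht1
      obtain ⟨h, hhc, hht⟩ := D1 c c' t t' hc3 hc1 hc'3 hc'1 ht2 ht1 ht'2 ht'1
      refine ⟨h, ?_⟩
      rintro ⟨a, b⟩ hab
      rcases D2 c t a hc3 hc1 ht2 ht1 with h' | h' | h' | h' | h' | h' <;> subst h'
      · rw [hg1 _ hab rfl]; group
      · rw [func _ _ _ hab hcS]; exact hhc
      · have : ((c*c, c'*c') : Perm (Fin 3) × Perm (Fin 3)) ∈ S := hmul _ hcS _ hcS
        rw [func _ _ _ hab this, hhc]; group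
      · rw [func _ _ _ hab htS]; exact hht
      · have : ((c*t, c'*t') : Perm (Fin 3) × Perm (Fin 3)) ∈ S := hmul _ hcS _ htS
        rw [func _ _ _ hab this, hhc, hht]; group
      · have : ((c*(c*t), c'*(c'*t')) : Perm (Fin 3) × Perm (Fin 3)) ∈ S :=
          hmul _ hcS _ (hmul _ hcS _ htS)
        rw [func _ _ _ hab this, hhc, hht]; group
    · push_neg at h2c
      obtain ⟨h, hhc⟩ := D3 c c' hc3 hc1 hc'3 hc'1
      refine ⟨h, ?_⟩
      rintro ⟨a, b⟩ hab
      rcases D4 c a hc3 hc1 with h' | h' | h' | ⟨h2, h1⟩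
      · subst h'; rw [hg1 _ hab rfl]; group
      · subst h'; rw [func _ _ _ hab hcS]; exact hhc
      · subst h'
        have : ((c*c, c'*c') : Perm (Fin 3) × Perm (Fin 3)) ∈ S := hmul _ hcS _ hcS
        rw [func _ _ _ hab this, hhc]; group
      · exact absurd (h2c _ hab h2) h1
  · push_neg at h3c
    by_cases h2c : ∃ p ∈ S, p.1*p.1 = 1 ∧ ¬p.1 = 1
    · obtain ⟨⟨t, t'⟩, htS, ht2, ht1⟩ := h2c
      have ht'2 : t'*t' = 1 := sq _ _ htS ht2
      have ht'1 : ¬t' = 1 := snd_ne _ _ htS ht1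
      obtain ⟨h, hht⟩ := D5 t t' ht2 ht1 ht'2 ht'1
      refine ⟨h, ?_⟩
      rintro ⟨a, b⟩ hab
      rcases D6 t a ht2 ht1 with h' | h' | ⟨h3, h1⟩ | ⟨h3, h1⟩
      · subst h'; rw [hg1 _ hab rfl]; group
      · subst h'; rw [func _ _ _ hab htS]; exact hht
      · exact absurd (h3c _ hab h3) h1
      · have hmem : ((t*a, t'*b) : Perm (Fin 3) × Perm (Fin 3)) ∈ S := hmul _ htS _ hab
        exact absurd (h3c _ hmem h3) h1
    · push_neg at h2c
      refine ⟨1, ?_⟩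
      rintro ⟨a, b⟩ hab
      rcases D7 a with h' | ⟨h2, h1⟩ | ⟨h3, h1⟩
      · subst h'; rw [hg1 _ hab rfl]; group
      · exact absurd (h2c _ hab h2) h1
      · exact absurd (h3c _ hab h3) h1

theorem key2 (S : Set (Perm (Fin 2) × Perm (Fin 2)))
    (hmul : ∀ p ∈ S, ∀ q ∈ S, p * q ∈ S)
    (hinv : ∀ p ∈ S, p⁻¹ ∈ S)
    (hg1 : ∀ p ∈ S, p.1 = 1 → p.2 = 1)
    (hg2 : ∀ p ∈ S, p.2 = 1 → p.1 = 1) :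
    ∃ h : Perm (Fin 2), ∀ p ∈ S, p.2 = h * p.1 * h⁻¹ := by
  refine ⟨1, ?_⟩
  rintro ⟨a, b⟩ hab
  by_cases ha : a = 1
  · subst ha
    rw [hg1 _ hab rfl]; group
  · have hb : ¬b = 1 := fun hb => ha (hg2 _ hab hb)
    exact D8 a b ha hb

theorem key1 (S : Set (Perm (Fin 1) × Perm (Fin 1)))
    (hmul : ∀ p ∈ S, ∀ q ∈ S, p * q ∈ S)
    (hinv : ∀ p ∈ S, p⁻¹ ∈ S)
    (hg1 : ∀ p ∈ S, p.1 = 1 → p.2 = 1)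
    (hg2 : ∀ p ∈ S, p.2 = 1 → p.1 = 1) :
    ∃ h : Perm (Fin 1), ∀ p ∈ S, p.2 = h * p.1 * h⁻¹ := by
  refine ⟨1, ?_⟩
  rintro ⟨a, b⟩ _
  exact D9 a b

theorem glue {A B C : Type} {n : ℕ} [Finite A] [Finite B] [Finite C] [Nonempty C]
    (hA : Nat.card A = n) (hB : Nat.card B = n)
    (hgcd : ∀ p : ℕ, p.Prime → p ∣ n.factorial → ¬ p ∣ Nat.card C)
    (f : A × C ≃ B × C)
    (key : ∀ S : Set (Perm (Fin n) × Perm (Fin n)),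
      (∀ p ∈ S, ∀ q ∈ S, p * q ∈ S) → (∀ p ∈ S, p⁻¹ ∈ S) →
      (∀ p ∈ S, p.1 = 1 → p.2 = 1) → (∀ p ∈ S, p.2 = 1 → p.1 = 1) →
      ∃ h : Perm (Fin n), ∀ p ∈ S, p.2 = h * p.1 * h⁻¹) :
    ∃ h : A ≃ B, IsEquivQuotient (⊤ : Subgroup (Equiv.Perm C)) f h := by
  classical
  obtain ⟨eA⟩ : Nonempty (A ≃ Fin n) := ⟨Finite.equivFinOfCardEq hA⟩
  obtain ⟨eB⟩ : Nonempty (B ≃ Fin n) := ⟨Finite.equivFinOfCardEq hB⟩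
  set liftA : Perm (Fin n) → Perm A := fun σ => eA.symm.permCongr σ with hliftA
  set liftB : Perm (Fin n) → Perm B := fun σ => eB.symm.permCongr σ with hliftB
  have liftA_mul : ∀ σ τ, liftA (σ * τ) = liftA σ * liftA τ := by
    intro σ τ; ext a; simp [hliftA, Equiv.permCongr_apply, Equiv.Perm.mul_apply]
  have liftB_mul : ∀ σ τ, liftB (σ * τ) = liftB σ * liftB τ := by
    intro σ τ; ext b; simp [hliftB, Equiv.permCongr_apply, Equiv.Perm.mul_apply]
  have liftA_one : liftA 1 = 1 := by
    ext a; simp [hliftA, Equiv.permCongr_apply]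
  have liftB_one : liftB 1 = 1 := by
    ext b; simp [hliftB, Equiv.permCongr_apply]
  have liftA_inj : ∀ σ, liftA σ = 1 → σ = 1 := by
    intro σ hσ
    apply Equiv.ext
    intro x
    have := congrArg (fun (g : Perm A) => eA (g (eA.symm x))) hσ
    simpa [hliftA, Equiv.permCongr_apply] using this
  have liftB_inj : ∀ σ, liftB σ = 1 → σ = 1 := by
    intro σ hσ
    apply Equiv.ext
    intro x
    have := congrArg (fun (g : Perm B) => eB (g (eB.symm x))) hσ
    simpa [hliftB, Equiv.permCongr_apply] using this
  set S : Set (Perm (Fin n) × Perm (Fin n)) :=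
    {p | ∃ γ : Perm C, transform f (liftA p.1) (liftB p.2) γ = f} with hS
  have hmul : ∀ p ∈ S, ∀ q ∈ S, p * q ∈ S := by
    rintro ⟨a, b⟩ ⟨γ₁, h1⟩ ⟨a', b'⟩ ⟨γ₂, h2⟩
    refine ⟨γ₁ * γ₂, ?_⟩
    show transform f (liftA (a * a')) (liftB (b * b')) (γ₁ * γ₂) = f
    rw [liftA_mul, liftB_mul, ← transform_comp, h2, h1]
  have hinv : ∀ p ∈ S, p⁻¹ ∈ S := by
    rintro ⟨a, b⟩ ⟨γ₁, h1⟩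
    refine ⟨γ₁⁻¹, ?_⟩
    show transform f (liftA a⁻¹) (liftB b⁻¹) γ₁⁻¹ = f
    have h2 : transform (transform f (liftA a) (liftB b) γ₁)
        (liftA a)⁻¹ (liftB b)⁻¹ γ₁⁻¹ = f := by
      rw [transform_comp]
      simp only [inv_mul_cancel]
      exact transform_one f
    rw [h1] at h2
    have ea : liftA a⁻¹ = (liftA a)⁻¹ := by
      have := liftA_mul a⁻¹ a
      rw [inv_mul_cancel, liftA_one] at this
      exact eq_inv_of_mul_eq_one_left this.symm
    have eb : liftB b⁻¹ = (liftB b)⁻¹ := by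
      have := liftB_mul b⁻¹ b
      rw [inv_mul_cancel, liftB_one] at this
      exact eq_inv_of_mul_eq_one_left this.symm
    rw [ea, eb]
    exact h2
  have hcard : Nat.card A = Nat.card B := by rw [hA, hB]
  have horder : ∀ (p : ℕ) (β : Perm B), p.Prime → p ∣ orderOf β → ¬ p ∣ Nat.card C := by
    intro p β hp hpd
    exact hgcd p hp (hpd.trans (by rw [← hB]; exact orderOf_perm_dvd_factorial β))
  have horderA : ∀ (p : ℕ) (α : Perm A), p.Prime → p ∣ orderOf α → ¬ p ∣ Nat.card C := by
    intro p α hp hpd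
    exact hgcd p hp (hpd.trans (by rw [← hA]; exact orderOf_perm_dvd_factorial α))
  have hg1 : ∀ p ∈ S, p.1 = 1 → p.2 = 1 := by
    rintro ⟨a, b⟩ ⟨γ₁, h1⟩ ha
    simp only at ha
    subst ha
    rw [liftA_one] at h1
    exact liftB_inj b (beta_eq_one h1 hcard (fun p hp hpd => horder p _ hp hpd))
  have hg2 : ∀ p ∈ S, p.2 = 1 → p.1 = 1 := by
    rintro ⟨a, b⟩ ⟨γ₁, h1⟩ hb
    simp only at hb
    subst hb
    rw [liftB_one] at h1
    exact liftA_inj a (alpha_eq_one h1 hcard (fun p hp hpd => horderA p _ hp hpd))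
  obtain ⟨h₀, hh₀⟩ := key S hmul hinv hg1 hg2
  refine ⟨(eA.trans h₀).trans eB.symm, ?_⟩
  intro α β γ _ hstab
  have hmem : ((eA.permCongr α, eB.permCongr β) : Perm (Fin n) × Perm (Fin n)) ∈ S := by
    refine ⟨γ, ?_⟩
    show transform f (liftA (eA.permCongr α)) (liftB (eB.permCongr β)) γ = f
    have e1 : liftA (eA.permCongr α) = α := by
      ext a; simp [hliftA, Equiv.permCongr_apply]
    have e2 : liftB (eB.permCongr β) = β := by
      ext b; simp [hliftB, Equiv.permCongr_apply]
    rw [e1, e2]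
    exact hstab
  have hkey : eB.permCongr β = h₀ * eA.permCongr α * h₀⁻¹ := hh₀ _ hmem
  have hpt : ∀ x : A, eB (β (eB.symm (h₀ (eA x)))) = h₀ (eA (α x)) := by
    intro x
    have hb := congrFun (congrArg (fun (g : Perm (Fin n)) => (g : Fin n → Fin n)) hkey)
      (h₀ (eA x))
    simpa only [Equiv.permCongr_apply, Equiv.Perm.mul_apply, Equiv.Perm.inv_def,
      Equiv.symm_apply_apply] using hb
  apply Equiv.ext
  intro a
  show β (eB.symm (h₀ (eA (α.symm a)))) = eB.symm (h₀ (eA a))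
  have hx := hpt (α.symm a)
  rw [Equiv.apply_symm_apply] at hx
  rw [← hx, Equiv.symm_apply_apply]

end EquivDivAux

theorem equivariant_division_small_n {A B C : Type} (n k : ℕ)
    (hn : n = 1 ∨ n = 2 ∨ n = 3) (hk : 1 ≤ k)
    (hgcd : Nat.gcd k (Nat.factorial n) = 1)
    (hA : Nat.card A = n) (hB : Nat.card B = n) (hC : Nat.card C = k)
    (f : A × C ≃ B × C) :
    ∃ h : A ≃ B, IsEquivQuotient (⊤ : Subgroup (Equiv.Perm C)) f h := by
  have hnpos : 0 < n := by rcases hn with h | h | h <;> omega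
  haveI : Finite A := Nat.finite_of_card_ne_zero (by omega)
  haveI : Finite B := Nat.finite_of_card_ne_zero (by omega)
  haveI : Finite C := Nat.finite_of_card_ne_zero (by omega)
  haveI : Nonempty C := (Nat.card_pos_iff.mp (by omega : 0 < Nat.card C)).1
  have hgcd' : ∀ p : ℕ, p.Prime → p ∣ n.factorial → ¬ p ∣ Nat.card C := by
    intro p hp hpn hpk
    rw [hC] at hpk
    have : p ∣ Nat.gcd k n.factorial := Nat.dvd_gcd hpk hpn
    rw [hgcd] at this
    exact hp.ne_one (Nat.dvd_one.mp this)
  rcases hn with h | h | h <;> subst h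
  · exact EquivDivAux.glue hA hB hgcd' f EquivDivAux.key1
  · exact EquivDivAux.glue hA hB hgcd' f EquivDivAux.key2
  · exact EquivDivAux.glue hA hB hgcd' f EquivDivAux.key3
end
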